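/- arXiv:2502.10161 — 12 statements merged into one kernel-verified Lean document; each statement's English description precedes it below -/
import Mathlib

section
/- Let X, Y, Z be finite random variables with |Y| = |Z| = 2 and |X| = n ≥ 2. Every joint distribution P(X,Y,Z) with P(Z=z) > 0 for all z that satisfies the IV inequalities max_x sum_y max_z P(X=x,Y=y|Z=z) ≤ 1 arises as the observational distribution of some SCM in the IV model class (i.e., some structural model X = f_X(Z,U), Y = f_Y(X,U) with U independent of Z). That is, the IV inequalities are sharp (necessary and sufficient) for binary instrument, binary outcome, and finite-valued treatment. -/
/-!
Let `p₀, p₁` be the conditional laws of `(X, Y)` given `Z = 0, 1`. An SCM reproducing them is a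
coupling of `p₀` and `p₁` (the pair of potential outcomes `(X(0), Y(0)), (X(1), Y(1))`) that never
puts mass on pairs `(x, y), (x, ¬y)`: such pairs would give the same treatment two different
responses. Flipping `y` in the second coordinate, this asks for a coupling of `p₀` and `p₁'` with
no mass on the diagonal, and such a coupling of two laws `a, b` exists as soon as
`a l + b l ≤ 1` for every `l`, which is exactly the IV inequality. The coupling is built greedily:
put as much mass as possible on an off-diagonal cell `(l₁, l₂)` with `a l₁, b l₂ > 0`; either a
marginal cell is exhausted (induction on the supports), or some third point `l₀` becomes tight,
`a l₀ + b l₀ = total`, and then row `l₀` carries `b` off `l₀` while column `l₀` carries `a`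
off `l₀`.
-/

open MeasureTheory ProbabilityTheory Finset
open scoped ENNReal

section OffDiagCoupling

variable {S : Type*} [Fintype S]

structure IsOffDiagCoupling (a b : S → ℝ) (q : S → S → ℝ) : Prop where
  nonneg : ∀ l r, 0 ≤ q l r
  diag_eq_zero : ∀ l, q l l = 0
  sum_row : ∀ l, ∑ r, q l r = a l
  sum_col : ∀ r, ∑ l, q l r = b r

theorem IsOffDiagCoupling.zero : IsOffDiagCoupling (0 : S → ℝ) 0 0 :=
  ⟨fun _ _ => le_rfl, fun _ => rfl, fun _ => by simp, fun _ => by simp⟩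

variable [DecidableEq S]

theorem IsOffDiagCoupling.of_tight {a b : S → ℝ} (ha : ∀ l, 0 ≤ a l) (hb : ∀ l, 0 ≤ b l)
    (hab : ∑ l, a l = ∑ l, b l) {l₀ : S} (htight : a l₀ + b l₀ = ∑ l, a l) :
    IsOffDiagCoupling a b fun l r =>
      if l = l₀ then (if r = l₀ then 0 else b r) else (if r = l₀ then a l else 0) where
  nonneg l r := by split_ifs <;> simp [ha, hb]
  diag_eq_zero l := by split_ifs <;> rfl
  sum_row l := by
    split_ifs with hl
    · subst hl
      simp only [sum_ite, sum_const_zero, filter_ne', sum_erase_eq_sub, mem_univ, zero_add]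
      linarith
    · simp
  sum_col r := by
    split_ifs with hr
    · subst hr
      simp only [sum_ite, sum_const_zero, filter_ne', sum_erase_eq_sub, mem_univ, zero_add]
      linarith
    · simp

theorem IsOffDiagCoupling.add_single {a b : S → ℝ} {q : S → S → ℝ} {l₁ l₂ : S} {ε : ℝ}
    (hq : IsOffDiagCoupling (a - Pi.single l₁ ε) (b - Pi.single l₂ ε) q) (h₁₂ : l₁ ≠ l₂)
    (hε : 0 ≤ ε) : IsOffDiagCoupling a b (q + Pi.single l₁ (Pi.single l₂ ε : S → ℝ)) where
  nonneg l r := by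
    have h : (0 : S → S → ℝ) ≤ Pi.single l₁ (Pi.single l₂ ε : S → ℝ) :=
      Pi.single_nonneg.2 (Pi.single_nonneg.2 hε)
    exact add_nonneg (hq.nonneg l r) (h l r)
  diag_eq_zero l := by
    rcases eq_or_ne l l₁ with rfl | hl
    · simp [hq.diag_eq_zero, h₁₂]
    · simp [hq.diag_eq_zero, hl]
  sum_row l := by
    have := hq.sum_row l
    rcases eq_or_ne l l₁ with rfl | hl
    · simp_all [sum_add_distrib]
    · simp_all
  sum_col r := by
    have hsingle : ∑ l, (Pi.single l₁ (Pi.single l₂ ε : S → ℝ) : S → S → ℝ) l r =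
        (Pi.single l₂ ε : S → ℝ) r := by
      rw [← Finset.sum_apply, sum_pi_single', if_pos (mem_univ _)]
    simp only [Pi.add_apply, sum_add_distrib, hq.sum_col, hsingle, Pi.sub_apply, sub_add_cancel]

theorem filter_sub_single_ne_zero_subset {f : S → ℝ} {i : S} (hi : f i ≠ 0) (ε : ℝ) :
    ({l | (f - Pi.single i ε : S → ℝ) l ≠ 0} : Finset S) ⊆ ({l | f l ≠ 0} : Finset S) := by
  intro l hl
  rcases eq_or_ne l i with rfl | h
  · simpa using hi
  · simpa [h] using hl

theorem card_filter_sub_single_self_ne_zero_lt {f : S → ℝ} {i : S} (hi : f i ≠ 0) :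
    #{l | (f - Pi.single i (f i) : S → ℝ) l ≠ 0} < #{l | f l ≠ 0} :=
  card_lt_card <| (ssubset_iff_of_subset (filter_sub_single_ne_zero_subset hi (f i))).2
    ⟨i, by simpa using hi, by simp⟩

structure OffDiagFeasible (a b : S → ℝ) : Prop where
  nonneg_left : ∀ l, 0 ≤ a l
  nonneg_right : ∀ l, 0 ≤ b l
  sum_eq : ∑ l, a l = ∑ l, b l
  add_le_sum : ∀ l, a l + b l ≤ ∑ l, a l

theorem OffDiagFeasible.sub_single {a b : S → ℝ} (h : OffDiagFeasible a b) {l₁ l₂ : S}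
    (h₁₂ : l₁ ≠ l₂) {ε : ℝ} (hεa : ε ≤ a l₁) (hεb : ε ≤ b l₂)
    (hεslack : ∀ l, l ≠ l₁ → l ≠ l₂ → ε ≤ (∑ k, a k) - a l - b l) :
    OffDiagFeasible (a - Pi.single l₁ ε) (b - Pi.single l₂ ε) := by
  have hsum_a : ∑ l, (a - Pi.single l₁ ε : S → ℝ) l = ∑ l, a l - ε := by simp [sum_sub_distrib]
  have hsum_b : ∑ l, (b - Pi.single l₂ ε : S → ℝ) l = ∑ l, b l - ε := by simp [sum_sub_distrib]
  refine ⟨fun l => ?_, fun l => ?_, by rw [hsum_a, hsum_b, h.sum_eq], fun l => ?_⟩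
  · rcases eq_or_ne l l₁ with rfl | hl <;> simp [*, h.nonneg_left l]
  · rcases eq_or_ne l l₂ with rfl | hl <;> simp [*, h.nonneg_right l]
  · have := h.add_le_sum l
    rw [hsum_a]
    simp only [Pi.sub_apply, Pi.single_apply]
    split_ifs with hl₁ hl₂ hl₂
    · exact absurd (hl₁.symm.trans hl₂) h₁₂
    · linarith
    · linarith
    · linarith [hεslack l hl₁ hl₂]

theorem OffDiagFeasible.exists_ne_right_ne_zero {a b : S → ℝ} (h : OffDiagFeasible a b)
    {l₁ : S} (ha₁ : a l₁ ≠ 0) : ∃ l₂, l₁ ≠ l₂ ∧ b l₂ ≠ 0 := by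
  by_contra! hb
  have hsum : ∑ l, b l = b l₁ := sum_eq_single l₁ (fun l _ hl => hb l hl.symm) (by simp)
  have := h.add_le_sum l₁
  exact ha₁ (le_antisymm (by linarith [h.sum_eq]) (h.nonneg_left l₁))

theorem OffDiagFeasible.exists_sub_single {a b : S → ℝ} (h : OffDiagFeasible a b) {l₁ l₂ : S}
    (h₁₂ : l₁ ≠ l₂) :
    ∃ ε, 0 ≤ ε ∧ OffDiagFeasible (a - Pi.single l₁ ε) (b - Pi.single l₂ ε) ∧
      (ε = a l₁ ∨ ε = b l₂ ∨
        ∃ l₀, (a - Pi.single l₁ ε : S → ℝ) l₀ + (b - Pi.single l₂ ε : S → ℝ) l₀ =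
          ∑ l, (a - Pi.single l₁ ε : S → ℝ) l) := by
  let c : S → ℝ := fun l =>
    if l = l₁ then a l₁ else if l = l₂ then b l₂ else (∑ k, a k) - a l - b l
  obtain ⟨l₃, -, hmin⟩ := exists_min_image univ c ⟨l₁, mem_univ _⟩
  have hεa : c l₃ ≤ a l₁ := by simpa [c] using hmin l₁ (mem_univ _)
  have hεb : c l₃ ≤ b l₂ := by simpa [c, h₁₂.symm] using hmin l₂ (mem_univ _)
  have hεslack : ∀ l, l ≠ l₁ → l ≠ l₂ → c l₃ ≤ (∑ k, a k) - a l - b l := fun l hl₁ hl₂ => by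
    simpa [c, hl₁, hl₂] using hmin l (mem_univ _)
  have hε : 0 ≤ c l₃ := by
    have := h.add_le_sum l₃
    simp only [c]
    split_ifs <;> linarith [h.nonneg_left l₁, h.nonneg_right l₂]
  refine ⟨c l₃, hε, h.sub_single h₁₂ hεa hεb hεslack, ?_⟩
  by_cases hl₃₁ : l₃ = l₁
  · exact .inl (by simp [c, hl₃₁])
  by_cases hl₃₂ : l₃ = l₂
  · exact .inr (.inl (by simp [c, hl₃₂, h₁₂.symm]))
  have hc : c l₃ = (∑ k, a k) - a l₃ - b l₃ := by simp [c, hl₃₁, hl₃₂]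
  refine .inr (.inr ⟨l₃, ?_⟩)
  simp only [Pi.sub_apply, Pi.single_eq_of_ne hl₃₁, Pi.single_eq_of_ne hl₃₂, sum_sub_distrib,
    sum_pi_single', mem_univ, if_true, hc]
  ring

theorem OffDiagFeasible.exists_isOffDiagCoupling {a b : S → ℝ} (h : OffDiagFeasible a b) :
    ∃ q, IsOffDiagCoupling a b q := by
  induction hN : #{l | a l ≠ 0} + #{l | b l ≠ 0} using Nat.strong_induction_on
    generalizing a b with
  | _ N ih =>
  by_cases ha₀ : ∀ l, a l = 0
  · obtain rfl : a = 0 := funext ha₀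
    obtain rfl : b = 0 := funext fun l =>
      le_antisymm (by simpa using h.add_le_sum l) (h.nonneg_right l)
    exact ⟨0, .zero⟩
  push Not at ha₀
  obtain ⟨l₁, ha₁⟩ := ha₀
  obtain ⟨l₂, h₁₂, hb₂⟩ := h.exists_ne_right_ne_zero ha₁
  obtain ⟨ε, hε, h', hε_a | hε_b | ⟨l₀, h₀⟩⟩ := h.exists_sub_single h₁₂
  · subst hε_a
    refine (ih _ ?_ h' rfl).elim fun q hq => ⟨_, hq.add_single h₁₂ hε⟩
    have := card_filter_sub_single_self_ne_zero_lt ha₁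
    have := card_le_card (filter_sub_single_ne_zero_subset hb₂ (a l₁))
    omega
  · subst hε_b
    refine (ih _ ?_ h' rfl).elim fun q hq => ⟨_, hq.add_single h₁₂ hε⟩
    have := card_le_card (filter_sub_single_ne_zero_subset ha₁ (b l₂))
    have := card_filter_sub_single_self_ne_zero_lt hb₂
    omega
  · exact ⟨_, (IsOffDiagCoupling.of_tight h'.nonneg_left h'.nonneg_right h'.sum_eq h₀).add_single
      h₁₂ hε⟩

end OffDiagCoupling

theorem sum_comp_not_snd {α M : Type*} [Fintype α] [AddCommMonoid M] (f : α × Bool → M) :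
    ∑ l : α × Bool, f (l.1, !l.2) = ∑ l, f l :=
  Equiv.sum_comp ((Equiv.refl α).prodCongr Equiv.boolNot) f

section PotentialOutcomes

variable {α : Type*} [DecidableEq α]

/-- A value `u` of the latent variable lists the pair `(X, Y)` observed under `Z = false` (`u.1`)
and under `Z = true` (`u.2`); `potentialResponse` reproduces both exactly when `u` is
`IsConsistent`. -/
def potentialTreatment (z : Bool) (u : (α × Bool) × (α × Bool)) : α :=
  (if z then u.2 else u.1).1

def potentialResponse (x : α) (u : (α × Bool) × (α × Bool)) : Bool :=
  if u.1.1 = x then u.1.2 else u.2.2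

def IsConsistent (u : (α × Bool) × (α × Bool)) : Prop :=
  u.1.1 = u.2.1 → u.1.2 = u.2.2

theorem potentialResponse_potentialTreatment {u : (α × Bool) × (α × Bool)} (hu : IsConsistent u)
    (z : Bool) : (potentialTreatment z u, potentialResponse (potentialTreatment z u) u) =
      if z then u.2 else u.1 := by
  cases z
  · simp [potentialTreatment, potentialResponse]
  · by_cases h : u.1.1 = u.2.1
    · simp [potentialTreatment, potentialResponse, h, hu h]
    · simp [potentialTreatment, potentialResponse, h]

theorem map_potentialOutcomes_apply_singleton [MeasurableSpace α] [MeasurableSingletonClass α]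
    [Countable α] (μ : Measure Bool) (ν : Measure ((α × Bool) × (α × Bool))) [SFinite ν]
    (hν : ∀ᵐ u ∂ν, IsConsistent u) (x : α) (y z : Bool) :
    (μ.prod ν).map (fun ω => (potentialTreatment ω.1 ω.2,
        potentialResponse (potentialTreatment ω.1 ω.2) ω.2, ω.1)) {(x, y, z)} =
      μ {z} * ν {u | (if z then u.2 else u.1) = (x, y)} := by
  have hpre : (fun ω : Bool × (α × Bool) × (α × Bool) => (potentialTreatment ω.1 ω.2,
        potentialResponse (potentialTreatment ω.1 ω.2) ω.2, ω.1)) ⁻¹' {(x, y, z)} =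
      {z} ×ˢ {u | (potentialTreatment z u, potentialResponse (potentialTreatment z u) u) =
        (x, y)} := by
    ext ⟨z', u⟩
    simp only [Set.mem_preimage, Set.mem_singleton_iff, Set.mem_prod, Set.mem_ofPred_eq,
      Prod.ext_iff]
    constructor
    · rintro ⟨hx, hy, rfl⟩
      exact ⟨rfl, hx, hy⟩
    · rintro ⟨rfl, hx, hy⟩
      exact ⟨hx, hy, rfl⟩
  rw [Measure.map_apply (measurable_of_countable _) (measurableSet_singleton _), hpre,
    Measure.prod_prod]
  congr 1
  refine measure_congr (Filter.eventuallyEq_set.2 ?_)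
  filter_upwards [hν] with u hu
  rw [potentialResponse_potentialTreatment hu]

theorem exists_measure_isConsistent_of_offDiagFeasible [Fintype α] [MeasurableSpace α]
    [MeasurableSingletonClass α] {p : Bool → α × Bool → ℝ}
    (h : OffDiagFeasible (p false) fun l => p true (l.1, !l.2)) (hsum : ∑ l, p false l = 1) :
    ∃ ν : Measure ((α × Bool) × (α × Bool)), IsProbabilityMeasure ν ∧
      (∀ᵐ u ∂ν, IsConsistent u) ∧
      ∀ z l, ν {u | (if z then u.2 else u.1) = l} = ENNReal.ofReal (p z l) := by
  obtain ⟨q, hq⟩ := h.exists_isOffDiagCoupling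
  let w : (α × Bool) × (α × Bool) → ℝ≥0∞ := fun u => ENNReal.ofReal (q u.1 (u.2.1, !u.2.2))
  have hw : ∑ u, w u = 1 := by
    rw [← ENNReal.ofReal_sum_of_nonneg fun u _ => hq.nonneg _ _, Fintype.sum_prod_type]
    simp only [sum_comp_not_snd (q _), hq.sum_row, hsum, ENNReal.ofReal_one]
  refine ⟨(PMF.ofFintype w hw).toMeasure, inferInstance, ?_, ?_⟩
  · rw [ae_iff, PMF.toMeasure_apply_fintype]
    refine sum_eq_zero fun u _ => Set.indicator_apply_eq_zero.2 fun hu => ?_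
    obtain ⟨hx, hy⟩ := Classical.not_imp.1 hu
    have : (u.2.1, !u.2.2) = u.1 := Prod.ext hx.symm (by simpa [eq_comm, Bool.eq_not] using hy)
    simp [w, this, hq.diag_eq_zero]
  · intro z l
    rw [PMF.toMeasure_apply_fintype, Fintype.sum_prod_type]
    cases z
    · simp only [Set.indicator_apply, Set.mem_ofPred_eq, Bool.false_eq_true, if_false,
        PMF.ofFintype_apply, w]
      rw [Fintype.sum_eq_single l fun l' hl' => by simp [hl']]
      simp only [if_true]
      rw [← ENNReal.ofReal_sum_of_nonneg fun r _ => hq.nonneg _ _, sum_comp_not_snd (q l),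
        hq.sum_row]
    · simp only [Set.indicator_apply, Set.mem_ofPred_eq, if_true, sum_ite_eq', mem_univ,
        PMF.ofFintype_apply, w]
      rw [← ENNReal.ofReal_sum_of_nonneg fun r _ => hq.nonneg _ _, hq.sum_col, Bool.not_not]

end PotentialOutcomes

section Conditionals

variable {α : Type*} [MeasurableSpace α]

noncomputable def condProb (P : Measure (α × Bool × Bool)) (z : Bool) (l : α × Bool) : ℝ≥0∞ :=
  P {(l.1, l.2, z)} / P {v | v.2.2 = z}

theorem condProb_ne_top (P : Measure (α × Bool × Bool)) [IsFiniteMeasure P] {z : Bool}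
    (hz : 0 < P {v | v.2.2 = z}) (l : α × Bool) : condProb P z l ≠ ∞ :=
  ENNReal.div_ne_top (measure_ne_top P _) hz.ne'

theorem sum_toReal_condProb [Fintype α] [MeasurableSingletonClass α]
    (P : Measure (α × Bool × Bool)) [IsFiniteMeasure P] {z : Bool} (hz : 0 < P {v | v.2.2 = z}) :
    ∑ l, (condProb P z l).toReal = 1 := by
  classical
  have hZ : {v : α × Bool × Bool | v.2.2 = z} =
      ↑(univ.image fun l : α × Bool => (l.1, l.2, z)) := by
    ext ⟨x, y, z'⟩
    simp [eq_comm]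
  rw [← ENNReal.toReal_sum fun l _ => condProb_ne_top P hz l, ← ENNReal.toReal_one]
  congr 1
  simp only [condProb, div_eq_mul_inv, ← sum_mul]
  rw [← sum_image (f := fun v => P {v}), sum_measure_singleton, ← hZ,
    ENNReal.mul_inv_cancel hz.ne' (measure_ne_top P _)]
  rintro l - l' - h
  simp only [Prod.ext_iff] at h
  exact Prod.ext h.1 h.2.1

theorem condProb_add_condProb_not_le_one (P : Measure (α × Bool × Bool)) {x : α}
    (hIV : ∑ y : Bool, ⨆ z : Bool,
      P {v | v.1 = x ∧ v.2.1 = y ∧ v.2.2 = z} / P {v | v.2.2 = z} ≤ 1) (y z z' : Bool) :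
    condProb P z (x, y) + condProb P z' (x, !y) ≤ 1 := by
  have hsingle (y z : Bool) : {v : α × Bool × Bool | v.1 = x ∧ v.2.1 = y ∧ v.2.2 = z} =
      {(x, y, z)} := by
    ext ⟨x', y', z'⟩
    simp [Prod.ext_iff]
  simp only [hsingle] at hIV
  calc condProb P z (x, y) + condProb P z' (x, !y)
      ≤ (⨆ z, condProb P z (x, y)) + ⨆ z, condProb P z (x, !y) :=
        add_le_add (le_iSup (fun z => condProb P z (x, y)) z)
          (le_iSup (fun z => condProb P z (x, !y)) z')
    _ = ∑ y, ⨆ z, condProb P z (x, y) := by cases y <;> simp [add_comm]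
    _ ≤ 1 := hIV

theorem offDiagFeasible_condProb [Fintype α] [MeasurableSingletonClass α]
    (P : Measure (α × Bool × Bool)) [IsFiniteMeasure P] (hpos : ∀ z : Bool, 0 < P {v | v.2.2 = z})
    (hIV : ∀ x : α, ∑ y : Bool, ⨆ z : Bool,
      P {v | v.1 = x ∧ v.2.1 = y ∧ v.2.2 = z} / P {v | v.2.2 = z} ≤ 1) :
    OffDiagFeasible (fun l => (condProb P false l).toReal)
      fun l => (condProb P true (l.1, !l.2)).toReal := by
  have hsum (z : Bool) := sum_toReal_condProb P (hpos z)
  refine ⟨fun _ => ENNReal.toReal_nonneg, fun _ => ENNReal.toReal_nonneg, ?_, fun l => ?_⟩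
  · rw [hsum, sum_comp_not_snd fun l => (condProb P true l).toReal, hsum]
  · rw [hsum, ← ENNReal.toReal_add (condProb_ne_top P (hpos _) _) (condProb_ne_top P (hpos _) _),
      ← ENNReal.toReal_one]
    exact ENNReal.toReal_mono ENNReal.one_ne_top
      (condProb_add_condProb_not_le_one P (hIV l.1) l.2 false true)

end Conditionals

theorem stmt3_general (n : ℕ)
    (P : Measure (Fin n × Bool × Bool)) [IsProbabilityMeasure P]
    (hpos : ∀ z : Bool, 0 < P {v | v.2.2 = z})
    (hIV : ∀ x : Fin n, ∑ y : Bool, ⨆ z : Bool,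
        P {v | v.1 = x ∧ v.2.1 = y ∧ v.2.2 = z} / P {v | v.2.2 = z} ≤ 1) :
    ∃ (Ω 𝓤 : Type) (_ : MeasurableSpace Ω) (_ : MeasurableSpace 𝓤)
      (μ : Measure Ω) (_ : IsProbabilityMeasure μ)
      (Z : Ω → Bool) (U : Ω → 𝓤)
      (fX : Bool → 𝓤 → Fin n) (fY : Fin n → 𝓤 → Bool),
      Measurable Z ∧ Measurable U ∧
      (∀ z, Measurable (fun ω => fX z (U ω))) ∧
      (∀ x, Measurable (fun ω => fY x (U ω))) ∧
      IndepFun Z U μ ∧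
      Measure.map
        (fun ω => (fX (Z ω) (U ω), fY (fX (Z ω) (U ω)) (U ω), Z ω)) μ = P := by
  obtain ⟨ν, hν, hconsistent, hmarginal⟩ := exists_measure_isConsistent_of_offDiagFeasible
    (p := fun z l => (condProb P z l).toReal) (offDiagFeasible_condProb P hpos hIV)
    (sum_toReal_condProb P (hpos false))
  have : IsProbabilityMeasure (P.map fun v => v.2.2) :=
    Measure.isProbabilityMeasure_map (measurable_of_countable _).aemeasurable
  refine ⟨Bool × (Fin n × Bool) × (Fin n × Bool), (Fin n × Bool) × (Fin n × Bool), inferInstance,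
    inferInstance, (P.map fun v => v.2.2).prod ν, inferInstance, Prod.fst, Prod.snd,
    potentialTreatment, potentialResponse, measurable_fst, measurable_snd,
    fun _ => measurable_of_countable _, fun _ => measurable_of_countable _,
    indepFun_prod measurable_id measurable_id, ?_⟩
  refine Measure.ext_of_singleton fun ⟨x, y, z⟩ => ?_
  rw [map_potentialOutcomes_apply_singleton _ _ hconsistent, hmarginal,
    ENNReal.ofReal_toReal (condProb_ne_top P (hpos z) _),
    Measure.map_apply (measurable_of_countable _) (measurableSet_singleton z), condProb]
  exact ENNReal.mul_div_cancel (hpos z).ne' (measure_ne_top P _)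

/-- Sharpness of the IV inequalities for binary instrument `Z`, binary outcome `Y`
and `n`-valued treatment `X` (`n ≥ 2`): every joint distribution `P(X,Y,Z)` with
positivity in `Z` that satisfies the IV inequalities on its conditionals
`P(X,Y|Z)` arises as the observational distribution of an SCM in the IV model
class, i.e. `X = f_X(Z,U)`, `Y = f_Y(X,U)` with `U` independent of `Z`. -/
theorem stmt3 (n : ℕ) (hn : 2 ≤ n)
    (P : Measure (Fin n × Bool × Bool)) [IsProbabilityMeasure P]
    (hpos : ∀ z : Bool, 0 < P {v | v.2.2 = z})
    (hIV : ∀ x : Fin n, ∑ y : Bool, ⨆ z : Bool,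
        P {v | v.1 = x ∧ v.2.1 = y ∧ v.2.2 = z} / P {v | v.2.2 = z} ≤ 1) :
    ∃ (Ω 𝓤 : Type) (_ : MeasurableSpace Ω) (_ : MeasurableSpace 𝓤)
      (μ : Measure Ω) (_ : IsProbabilityMeasure μ)
      (Z : Ω → Bool) (U : Ω → 𝓤)
      (fX : Bool → 𝓤 → Fin n) (fY : Fin n → 𝓤 → Bool),
      Measurable Z ∧ Measurable U ∧
      (∀ z, Measurable (fun ω => fX z (U ω))) ∧
      (∀ x, Measurable (fun ω => fY x (U ω))) ∧
      IndepFun Z U μ ∧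
      Measure.map
        (fun ω => (fX (Z ω) (U ω), fY (fX (Z ω) (U ω)) (U ω), Z ω)) μ = P :=
  stmt3_general n P hpos hIV
end

section
/- For binary Y and Z and n-valued X (n ≥ 2), the set of Markov kernels K(X,Y|Z) satisfying the IV inequalities is a polytope whose extreme points are exactly: (i) the kernels δ_{x,y|0} + δ_{x',y'|1} with x ≠ x' (deterministic kernels assigning point mass (x,y) given Z=0 and (x',y') given Z=1 with different treatment values), and (ii) the kernels δ_{x,y|0} + δ_{x,y|1} (the same point mass (x,y) for both values of Z). -/
/-- The polytope of Markov kernels `K(X,Y|Z)` (binary `Y`, `Z`; `X` taking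
values in `Fin n`) satisfying the IV inequalities.  `K x y z` denotes
`K(X=x, Y=y | Z=z)`. -/
def IVPolytope (n : ℕ) : Set (Fin n → Bool → Bool → ℝ) :=
  {K | (∀ x y z, 0 ≤ K x y z) ∧ (∀ z, ∑ x, ∑ y, K x y z = 1) ∧
       (∀ x, K x false false + K x true true ≤ 1 ∧
             K x false true + K x true false ≤ 1)}

/-- The kernel putting point mass on `(x,y)` given `Z = 0` (i.e. `false`)
and point mass on `(x',y')` given `Z = 1` (i.e. `true`). -/
def deltaKernel {n : ℕ} (x x' : Fin n) (y y' : Bool) : Fin n → Bool → Bool → ℝ :=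
  fun a b z =>
    if z = false then (if a = x ∧ b = y then 1 else 0)
    else (if a = x' ∧ b = y' then 1 else 0)

/-!
Relabelling `y ↦ y xor z` turns the IV inequalities into column constraints: a kernel becomes
a pair of probability vectors on `S = Fin n × Bool` (one row for each value of `Z`) whose two
entries in each column sum to at most one, and `deltaKernel x x' y y'` becomes the pair of point
masses at `(x, y)` and `(x', !y')`, which are distinct exactly when `x ≠ x'` or `y = y'`.

At an extreme point no direction can be followed both ways. If a row had two support points,
moving unit mass between them, compensated in the other row when a column is saturated, would be
such a direction; so each row is a point mass, at different points because of the column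
constraint. Conversely, 0/1 points are extreme already in the unit cube.
-/

open Filter Topology Finset

theorem eq_zero_of_mem_extremePoints_of_eventually_add_smul_mem {E : Type*} [AddCommGroup E]
    [Module ℝ E] {C : Set E} {x v : E} (hx : x ∈ C.extremePoints ℝ)
    (hv : ∀ᶠ t in 𝓝 (0 : ℝ), x + t • v ∈ C) : v = 0 := by
  obtain ⟨δ, hδ, hball⟩ := Metric.eventually_nhds_iff.1 hv
  have hdist : ∀ t : ℝ, |t| = δ / 2 → dist t 0 < δ := fun t ht => by
    rw [Real.dist_eq, sub_zero, ht]; linarith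
  have hplus := hball (hdist (δ / 2) (abs_of_pos (by linarith)))
  have hminus := hball (hdist (-(δ / 2)) (by rw [abs_neg]; exact abs_of_pos (by linarith)))
  have hmid : x ∈ openSegment ℝ (x + (δ / 2) • v) (x + (-(δ / 2)) • v) :=
    ⟨1 / 2, 1 / 2, by norm_num, by norm_num, by norm_num, by module⟩
  simpa [hδ.ne'] using hx.2 hplus hminus hmid

theorem eventually_nonneg_add_mul {a b : ℝ} (ha : 0 ≤ a) (h : b = 0 ∨ 0 < a) :
    ∀ᶠ t in 𝓝 (0 : ℝ), 0 ≤ a + t * b := by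
  rcases h with rfl | h
  · simpa using Eventually.of_forall (f := 𝓝 (0 : ℝ)) fun _ => ha
  · have : Tendsto (fun t : ℝ => a + t * b) (𝓝 0) (𝓝 a) :=
      (continuous_const.add (continuous_id.mul continuous_const)).tendsto' 0 a (by simp)
    exact this.eventually_const_le h

theorem eventually_add_mul_le {a b c : ℝ} (hac : a ≤ c) (h : b = 0 ∨ a < c) :
    ∀ᶠ t in 𝓝 (0 : ℝ), a + t * b ≤ c := by
  rcases h with rfl | h
  · simpa using Eventually.of_forall (f := 𝓝 (0 : ℝ)) fun _ => hac
  · have : Tendsto (fun t : ℝ => a + t * b) (𝓝 0) (𝓝 a) :=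
      (continuous_const.add (continuous_id.mul continuous_const)).tendsto' 0 a (by simp)
    exact this.eventually_le_const h

theorem Fintype.sum_bool_eq_add_not {M : Type*} [AddCommMonoid M] (z : Bool) (f : Bool → M) :
    ∑ w, f w = f z + f (!z) := by
  cases z <;> simp [add_comm]

theorem Pi.single_sub_single_apply_eq_zero_or {S M : Type*} [DecidableEq S] [AddGroup M]
    (m : M) (a b s : S) : (Pi.single a m - Pi.single b m : S → M) s = 0 ∨ s = a ∨ s = b := by
  by_cases ha : s = a
  · exact Or.inr (Or.inl ha)
  · by_cases hb : s = b
    · exact Or.inr (Or.inr hb)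
    · simp [ha, hb]

def fractionalInjections (S : Type*) [Fintype S] : Set (Bool → S → ℝ) :=
  {P | (∀ z s, 0 ≤ P z s) ∧ (∀ z, ∑ s, P z s = 1) ∧ ∀ s, ∑ z, P z s ≤ 1}

namespace fractionalInjections

variable {S : Type*} [Fintype S] {P : Bool → S → ℝ}

theorem le_one (hP : P ∈ fractionalInjections S) (z : Bool) (s : S) : P z s ≤ 1 :=
  hP.2.1 z ▸ single_le_sum (fun t _ => hP.1 z t) (mem_univ s)

theorem add_not_le_one (hP : P ∈ fractionalInjections S) (z : Bool) (s : S) :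
    P z s + P (!z) s ≤ 1 :=
  Fintype.sum_bool_eq_add_not z (P · s) ▸ hP.2.2 s

theorem add_le_one_of_ne (hP : P ∈ fractionalInjections S) (z : Bool) {s t : S} (hst : s ≠ t) :
    P z s + P z t ≤ 1 := by
  classical
  rw [← sum_pair hst, ← hP.2.1 z]
  exact sum_le_univ_sum_of_nonneg (hP.1 z)

theorem exists_pos (hP : P ∈ fractionalInjections S) (z : Bool) : ∃ s, 0 < P z s := by
  by_contra! h
  have := hP.2.1 z
  rw [sum_eq_zero fun s _ => (h s).antisymm (hP.1 z s)] at this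
  exact zero_ne_one this

theorem exists_ne_pos (hP : P ∈ fractionalInjections S) (z : Bool) {s : S} (hs : P z s < 1) :
    ∃ t ≠ s, 0 < P z t := by
  by_contra! h
  have := hP.2.1 z
  rw [sum_eq_single s (fun t _ hts => (h t hts).antisymm (hP.1 z t)) (by simp)] at this
  linarith

theorem sum_lt_one_of_eq_zero (hP : P ∈ fractionalInjections S) {z : Bool} {s t : S}
    (hst : s ≠ t) (ht : 0 < P z t) (hs : P (!z) s = 0) : ∑ w, P w s < 1 := by
  rw [Fintype.sum_bool_eq_add_not z, hs]
  linarith [add_le_one_of_ne hP z hst]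

theorem eventually_add_smul_mem (hP : P ∈ fractionalInjections S) {D : Bool → S → ℝ}
    (hsum : ∀ z, ∑ s, D z s = 0) (hpos : ∀ z s, D z s = 0 ∨ 0 < P z s)
    (hcol : ∀ s, ∑ z, D z s = 0 ∨ ∑ z, P z s < 1) :
    ∀ᶠ t in 𝓝 (0 : ℝ), P + t • D ∈ fractionalInjections S := by
  have hnonneg : ∀ᶠ t in 𝓝 (0 : ℝ), ∀ z s, 0 ≤ P z s + t * D z s := by
    simp only [eventually_all]
    exact fun z s => eventually_nonneg_add_mul (hP.1 z s) (hpos z s)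
  have hcol' : ∀ᶠ t in 𝓝 (0 : ℝ), ∀ s, ∑ z, P z s + t * ∑ z, D z s ≤ 1 := by
    simp only [eventually_all]
    exact fun s => eventually_add_mul_le (hP.2.2 s) (hcol s)
  filter_upwards [hnonneg, hcol'] with t hnonneg hcol'
  refine ⟨hnonneg, fun z => ?_, fun s => ?_⟩
  · simp [sum_add_distrib, ← mul_sum, hsum, hP.2.1]
  · simpa [sum_add_distrib, ← mul_sum] using hcol' s

variable [DecidableEq S]

/-- Moving mass from `b` to `a` in row `z` and from `d` to `c` in row `!z` can be done in both
directions unless it changes a saturated column, so at an extreme point it must be trivial. -/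
theorem eq_of_exchange (hP : P ∈ (fractionalInjections S).extremePoints ℝ) (z : Bool)
    {a b c d : S} (ha : 0 < P z a) (hb : 0 < P z b) (hc : 0 < P (!z) c) (hd : 0 < P (!z) d)
    (hslack : ∀ s,
      (Pi.single a 1 - Pi.single b 1 + (Pi.single c 1 - Pi.single d 1) : S → ℝ) s = 0 ∨
        ∑ w, P w s < 1) :
    a = b := by
  set u : S → ℝ := Pi.single a 1 - Pi.single b 1
  set v : S → ℝ := Pi.single c 1 - Pi.single d 1
  have hD := eq_zero_of_mem_extremePoints_of_eventually_add_smul_mem hP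
    (v := fun w s => if w = z then u s else v s) <| eventually_add_smul_mem hP.1 ?_ ?_ ?_
  · by_contra hab
    have := congr_fun (congr_fun hD z) a
    simp [u, hab] at this
  · intro w
    split_ifs <;> simp [u, v]
  · intro w s
    obtain rfl | rfl : w = z ∨ w = !z := by cases w <;> cases z <;> simp
    · rcases Pi.single_sub_single_apply_eq_zero_or (1 : ℝ) a b s with h | rfl | rfl <;>
        simp_all [u]
    · rcases Pi.single_sub_single_apply_eq_zero_or (1 : ℝ) c d s with h | rfl | rfl <;>
        simp_all [u, v]
  · intro s
    rw [Fintype.sum_bool_eq_add_not z]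
    simpa using hslack s

theorem eq_of_pos_both_rows (hP : P ∈ (fractionalInjections S).extremePoints ℝ) {z : Bool}
    {a b : S} (ha : 0 < P z a) (hb : 0 < P z b) (hqa : 0 < P (!z) a) (hqb : 0 < P (!z) b) :
    a = b :=
  eq_of_exchange hP z ha hb hqb hqa fun s => Or.inl (by simp)

theorem eq_of_pos_of_eq_zero (hP : P ∈ (fractionalInjections S).extremePoints ℝ) {z : Bool}
    {a b : S} (ha : 0 < P z a) (hb : 0 < P z b) (hqa : 0 < P (!z) a) (hqb : P (!z) b = 0) :
    a = b := by
  by_contra hab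
  have hqa_lt : P (!z) a < 1 := by linarith [add_not_le_one hP.1 z a]
  obtain ⟨c, hca, hqc⟩ := exists_ne_pos hP.1 (!z) hqa_lt
  rcases (hP.1.1 z c).eq_or_lt' with hpc | hpc
  · refine hab (eq_of_exchange hP z ha hb hqc hqa fun s => ?_)
    by_cases hsb : s = b
    · exact Or.inr (hsb ▸ sum_lt_one_of_eq_zero hP.1 (Ne.symm hab) ha hqb)
    by_cases hsc : s = c
    · exact Or.inr (hsc ▸ sum_lt_one_of_eq_zero hP.1 (z := !z) hca hqa (by simpa using hpc))
    · exact Or.inl (by simp [Pi.single_apply, hsb, hsc])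
  · exact hca (eq_of_pos_both_rows hP hpc ha hqc hqa)

theorem eq_of_pos_of_pos (hP : P ∈ (fractionalInjections S).extremePoints ℝ) {z : Bool}
    {a b : S} (ha : 0 < P z a) (hb : 0 < P z b) : a = b := by
  by_contra hab
  rcases (hP.1.1 (!z) a).eq_or_lt' with hqa | hqa <;>
    rcases (hP.1.1 (!z) b).eq_or_lt' with hqb | hqb
  · obtain ⟨c, hc⟩ := exists_pos hP.1 (!z)
    refine hab (eq_of_exchange hP z ha hb hc hc fun s => ?_)
    rcases Pi.single_sub_single_apply_eq_zero_or (1 : ℝ) a b s with h | rfl | rfl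
    · exact Or.inl (by simpa using h)
    · exact Or.inr (sum_lt_one_of_eq_zero hP.1 hab hb hqa)
    · exact Or.inr (sum_lt_one_of_eq_zero hP.1 (Ne.symm hab) ha hqb)
  · exact hab (eq_of_pos_of_eq_zero hP hb ha hqb hqa).symm
  · exact hab (eq_of_pos_of_eq_zero hP ha hb hqa hqb)
  · exact hab (eq_of_pos_both_rows hP ha hb hqa hqb)

theorem exists_eq_single (hP : P ∈ (fractionalInjections S).extremePoints ℝ) (z : Bool) :
    ∃ s, P z = Pi.single s 1 := by
  obtain ⟨a, ha⟩ := exists_pos hP.1 z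
  have hzero : ∀ t ≠ a, P z t = 0 := fun t hta =>
    (hP.1.1 z t).eq_or_lt'.resolve_right fun ht => hta (eq_of_pos_of_pos hP ht ha)
  have hone : P z a = 1 := by
    rw [← hP.1.2.1 z, sum_eq_single a (fun t _ => hzero t) (by simp)]
  refine ⟨a, funext fun t => ?_⟩
  by_cases hta : t = a
  · simp [hta, hone]
  · simp [hta, hzero t hta]

theorem single_mem {s : Bool → S} (hs : Function.Injective s) :
    (fun z => Pi.single (s z) 1) ∈ fractionalInjections S := by
  refine ⟨fun z t => ?_, fun z => by simp, fun t => ?_⟩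
  · by_cases h : t = s z <;> simp [h]
  · have := Bool.injective_iff.1 hs
    rw [Fintype.sum_bool]
    by_cases h1 : t = s true <;> by_cases h2 : t = s false <;> simp_all

theorem single_mem_extremePoints {s : Bool → S} (hs : Function.Injective s) :
    (fun z => Pi.single (s z) 1) ∈ (fractionalInjections S).extremePoints ℝ := by
  have hcube : fractionalInjections S ⊆ Set.univ.pi fun _ => Set.univ.pi fun _ => Set.Icc 0 1 :=
    fun P hP z _ t _ => ⟨hP.1 z t, le_one hP z t⟩
  refine inter_extremePoints_subset_extremePoints_of_subset hcube ⟨single_mem hs, ?_⟩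
  simp only [extremePoints_pi, Set.extremePoints_Icc zero_le_one]
  intro z _ t _
  by_cases h : t = s z <;> simp [h]

theorem extremePoints_eq :
    (fractionalInjections S).extremePoints ℝ =
      {P | ∃ s : Bool → S, Function.Injective s ∧ P = fun z => Pi.single (s z) 1} := by
  ext P
  refine ⟨fun hP => ?_, fun ⟨s, hs, hPs⟩ => hPs ▸ single_mem_extremePoints hs⟩
  choose s hs using exists_eq_single hP
  refine ⟨s, Bool.injective_iff.2 fun hst => ?_, funext hs⟩
  have := hP.1.2.2 (s false)
  norm_num [hs, hst] at this

end fractionalInjections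

def ivRelabel (n : ℕ) : (Fin n → Bool → Bool → ℝ) ≃ₗ[ℝ] (Bool → Fin n × Bool → ℝ) where
  toFun K z s := K s.1 (s.2 ^^ z) z
  invFun P x y z := P z (x, y ^^ z)
  map_add' _ _ := rfl
  map_smul' _ _ := rfl
  left_inv K := by funext x y z; simp
  right_inv P := by funext z s; simp

theorem IVPolytope_eq_image (n : ℕ) :
    IVPolytope n = (ivRelabel n).symm '' fractionalInjections (Fin n × Bool) := by
  ext K
  rw [LinearEquiv.image_symm_eq_preimage]
  simp only [IVPolytope, fractionalInjections, ivRelabel, Set.mem_preimage, Set.mem_ofPred_eq,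
    LinearEquiv.coe_mk, LinearMap.coe_mk, AddHom.coe_mk, Bool.forall_bool, Prod.forall,
    Fintype.sum_prod_type, Fintype.sum_bool, Bool.xor_false, Bool.xor_true, Bool.not_false,
    Bool.not_true]
  grind

theorem ivRelabel_symm_single {n : ℕ} (s : Bool → Fin n × Bool) :
    (ivRelabel n).symm (fun z => Pi.single (s z) 1) =
      deltaKernel (s false).1 (s true).1 (s false).2 (!(s true).2) := by
  funext x y z
  cases z <;> simp [ivRelabel, deltaKernel, Pi.single_apply, Prod.ext_iff]

theorem stmt4_general (n : ℕ) :
    Set.extremePoints ℝ (IVPolytope n) =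
      {K | (∃ (x x' : Fin n) (y y' : Bool), x ≠ x' ∧ K = deltaKernel x x' y y')
        ∨ (∃ (x : Fin n) (y : Bool), K = deltaKernel x x y y)} := by
  rw [IVPolytope_eq_image, ← image_extremePoints, fractionalInjections.extremePoints_eq]
  ext K
  simp only [Set.mem_image, Set.mem_ofPred_eq]
  constructor
  · rintro ⟨_, ⟨s, hs, rfl⟩, rfl⟩
    rw [ivRelabel_symm_single]
    by_cases hx : (s false).1 = (s true).1
    · have hy : (s false).2 = !(s true).2 := by
        have := Bool.injective_iff.1 hs
        grind
      exact Or.inr ⟨_, _, by rw [hx, hy]⟩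
    · exact Or.inl ⟨_, _, _, _, hx, rfl⟩
  · rintro (⟨x, x', y, y', hx, rfl⟩ | ⟨x, y, rfl⟩)
    · refine ⟨_, ⟨fun z => cond z (x', !y') (x, y), ?_, rfl⟩,
        by simp [ivRelabel_symm_single]⟩
      simp [Bool.injective_iff, hx]
    · refine ⟨_, ⟨fun z => cond z (x, !y) (x, y), ?_, rfl⟩,
        by simp [ivRelabel_symm_single]⟩
      simp [Bool.injective_iff]

/-- The extreme points of the IV polytope are exactly: (i) the deterministic
kernels `δ_{x,y|0} + δ_{x',y'|1}` with `x ≠ x'`, and (ii) the kernels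
`δ_{x,y|0} + δ_{x,y|1}` assigning the same point mass for both values of `Z`. -/
theorem stmt4 (n : ℕ) (hn : 2 ≤ n) :
    Set.extremePoints ℝ (IVPolytope n) =
      {K | (∃ (x x' : Fin n) (y y' : Bool), x ≠ x' ∧ K = deltaKernel x x' y y')
        ∨ (∃ (x : Fin n) (y : Bool), K = deltaKernel x x y y)} :=
  stmt4_general n
end

section
/- Each kernel of the form δ_{x,y|0} + δ_{x',y'|1} with x ≠ x' (point mass on (x,y) given Z=0 and point mass on (x',y') given Z=1) satisfies the IV inequalities and is an extreme point of the polytope of Markov kernels satisfying the IV inequalities. -/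
lemma exists_pos_smul_le_of_mem_openSegment {E : Type*} [AddCommGroup E] [PartialOrder E]
    [IsOrderedAddMonoid E] [Module ℝ E] [PosSMulMono ℝ E] {A B C : E} (hB : 0 ≤ B)
    (h : C ∈ openSegment ℝ A B) : ∃ a : ℝ, 0 < a ∧ a • A ≤ C := by
  obtain ⟨a, b, ha, hb, -, rfl⟩ := h
  exact ⟨a, ha, le_add_of_nonneg_right (smul_nonneg hb.le hB)⟩

section

variable {n : ℕ} {x x' : Fin n} {y y' : Bool}

@[simp] lemma deltaKernel_false (a : Fin n) (b : Bool) :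
    deltaKernel x x' y y' a b false = if a = x ∧ b = y then 1 else 0 := rfl

@[simp] lemma deltaKernel_true (a : Fin n) (b : Bool) :
    deltaKernel x x' y y' a b true = if a = x' ∧ b = y' then 1 else 0 := rfl

lemma deltaKernel_mem_IVPolytope (hxx : x ≠ x') : deltaKernel x x' y y' ∈ IVPolytope n := by
  have indicator_add_le {P Q : Prop} [Decidable P] [Decidable Q] (h : ¬(P ∧ Q)) :
      (if P then (1 : ℝ) else 0) + (if Q then 1 else 0) ≤ 1 := by
    split_ifs with hP hQ
    exacts [absurd ⟨hP, hQ⟩ h, by norm_num, by norm_num, by norm_num]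
  refine ⟨fun a b z => ?_, fun z => ?_, fun a => ⟨?_, ?_⟩⟩
  · cases z <;> simp only [deltaKernel_false, deltaKernel_true] <;> split_ifs <;> norm_num
  · cases z <;> simp [ite_and]
  · exact indicator_add_le fun h => hxx (h.1.1.symm.trans h.2.1)
  · exact indicator_add_le fun h => hxx (h.2.1.symm.trans h.1.1)

lemma apply_eq_one_of_mem_IVPolytope {K : Fin n → Bool → Bool → ℝ}
    (hK : K ∈ IVPolytope n) {z : Bool} {u : Fin n} {v : Bool}
    (h : ∀ a b, (a, b) ≠ (u, v) → K a b z = 0) : K u v z = 1 := by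
  rw [← hK.2.1 z, ← Fintype.sum_prod_type', Fintype.sum_eq_single (u, v) fun p hp => h _ _ hp]

lemma eq_deltaKernel_of_mem_IVPolytope {K : Fin n → Bool → Bool → ℝ} (hK : K ∈ IVPolytope n)
    (h : ∀ a b z, deltaKernel x x' y y' a b z = 0 → K a b z = 0) :
    K = deltaKernel x x' y y' := by
  funext a b z
  by_cases hd : deltaKernel x x' y y' a b z = 0
  · rw [hd, h a b z hd]
  cases z <;> simp only [deltaKernel_false, deltaKernel_true, ite_eq_right_iff,
    one_ne_zero, imp_false, not_not] at hd <;> obtain ⟨rfl, rfl⟩ := hd <;>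
    simpa using apply_eq_one_of_mem_IVPolytope hK fun a' b' hne => h a' b' _ (by aesop)

end

theorem stmt5_general (n : ℕ) (x x' : Fin n) (y y' : Bool) (hxx : x ≠ x') :
    deltaKernel x x' y y' ∈ IVPolytope n ∧
    deltaKernel x x' y y' ∈ Set.extremePoints ℝ (IVPolytope n) := by
  have hmem := deltaKernel_mem_IVPolytope (y := y) (y' := y') hxx
  refine ⟨hmem, mem_extremePoints_iff_left.2 ⟨hmem, fun A hA B hB hseg => ?_⟩⟩
  obtain ⟨c, hc, hle⟩ := exists_pos_smul_le_of_mem_openSegment (fun a b z => hB.1 a b z) hseg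
  refine eq_deltaKernel_of_mem_IVPolytope hA fun a b z hd => le_antisymm ?_ (hA.1 a b z)
  exact nonpos_of_mul_nonpos_right (hd ▸ hle a b z) hc

/-- Each kernel `δ_{x,y|0} + δ_{x',y'|1}` with `x ≠ x'` satisfies the IV
inequalities and is an extreme point of the IV polytope. -/
theorem stmt5 (n : ℕ) (hn : 2 ≤ n) (x x' : Fin n) (y y' : Bool) (hxx : x ≠ x') :
    deltaKernel x x' y y' ∈ IVPolytope n ∧
    deltaKernel x x' y y' ∈ Set.extremePoints ℝ (IVPolytope n) :=
  stmt5_general n x x' y y' hxx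
end

section
/- If a Markov kernel K(X,Y|Z) (binary Y, Z, finite X) is a feasible point of the IV polytope at which more than two of the 2n IV inequalities are tight (hold with equality), then a contradiction with the normalization constraints arises; hence at any feasible point at most two IV inequalities can be active. -/
/-!
Every entry `K(x,y|z)` occurs in exactly one IV inequality, so the left-hand sides of the `2n`
inequalities add up to the total mass `∑_z ∑_{x,y} K(x,y|z) = 2`. They are nonnegative, so at
most two of them can equal `1`.
-/

open Finset

theorem card_filter_eq_one_le_sum {ι R : Type*} [AddCommMonoidWithOne R] [PartialOrder R]
    [IsOrderedAddMonoid R] (s : Finset ι) (f : ι → R) [DecidablePred fun i => f i = 1]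
    (hf : ∀ i ∈ s, 0 ≤ f i) :
    ((s.filter fun i => f i = 1).card : R) ≤ ∑ i ∈ s, f i :=
  calc ((s.filter fun i => f i = 1).card : R)
      = ∑ i ∈ s.filter fun i => f i = 1, f i := by
        rw [sum_congr rfl fun i hi => (mem_filter.mp hi).2]; simp
    _ ≤ ∑ i ∈ s, f i :=
        sum_le_sum_of_subset_of_nonneg (filter_subset _ s) fun i hi _ => hf i hi

def ivLhs {n : ℕ} (K : Fin n → Bool → Bool → ℝ) (p : Fin n × Bool) : ℝ :=
  K p.1 false p.2 + K p.1 true (!p.2)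

theorem sum_ivLhs {n : ℕ} (K : Fin n → Bool → Bool → ℝ) :
    ∑ p, ivLhs K p = ∑ z, ∑ x, ∑ y, K x y z := by
  simp only [ivLhs, Fintype.sum_prod_type, Fintype.sum_bool, Bool.not_true, Bool.not_false,
    ← sum_add_distrib]
  exact sum_congr rfl fun x _ => by ring

theorem ivLhs_nonneg {n : ℕ} {K : Fin n → Bool → Bool → ℝ} (hK : K ∈ IVPolytope n)
    (p : Fin n × Bool) : 0 ≤ ivLhs K p :=
  add_nonneg (hK.1 _ _ _) (hK.1 _ _ _)

theorem sum_ivLhs_eq_two {n : ℕ} {K : Fin n → Bool → Bool → ℝ} (hK : K ∈ IVPolytope n) :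
    ∑ p, ivLhs K p = 2 := by
  rw [sum_ivLhs, Fintype.sum_bool, hK.2.1, hK.2.1]
  norm_num

open scoped Classical in
/-- At any feasible point of the IV polytope, at most two of the `2n` IV
inequalities (indexed by `(x, z)`, reading `K(x,0|z) + K(x,1|¬z) ≤ 1`)
can be active (tight). -/
theorem stmt6 (n : ℕ) (K : Fin n → Bool → Bool → ℝ) (hK : K ∈ IVPolytope n) :
    (Finset.univ.filter
      (fun p : Fin n × Bool => K p.1 false p.2 + K p.1 true (!p.2) = 1)).card ≤ 2 := by
  have h := card_filter_eq_one_le_sum univ (ivLhs K) fun p _ => ivLhs_nonneg hK p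
  rw [sum_ivLhs_eq_two hK] at h
  exact_mod_cast h
end

section
/- In the no-confounding model class M_no-cf, counterfactual fairness implies interventional fairness: if for all d, s, f_A(s,d,U_A) = f_A(S,d,U_A) almost surely, then for all d, s, P(A=1 | do(S=s), do(D=d)) = P(A=1 | do(D=d)). The converse fails: there exists an SCM (e.g., S = U_S ~ Ber(δ), D = S ⊕ U_D with U_D ~ Ber(1/2), A = S ⊕ D ⊕ U_A with U_A ~ Ber(ε)) that is interventionally fair but not counterfactually fair. -/
open MeasureTheory ProbabilityTheory
open scoped ENNReal

/-!
Counterfactual fairness says that `fA s d U_A` and `fA S d U_A` agree almost surely, so the events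
`{A = 1}` under the two interventions differ by a null set and have the same probability.
For the converse, take `A = S ⊕ D ⊕ U_A` with `U_A` a fair coin: `s ⊕ d ⊕ U_A` is a fair coin for
every `s` and `d`, so the model is interventionally fair, yet changing `s` flips `A` surely.
-/

section Fairness

variable {Ω 𝓓 𝓤 : Type*} [MeasurableSpace Ω]

def CounterfactuallyFair (μ : Measure Ω) (S : Ω → Bool) (UA : Ω → 𝓤)
    (fA : Bool → 𝓓 → 𝓤 → Bool) : Prop :=
  ∀ d s, μ {ω | fA s d (UA ω) = fA (S ω) d (UA ω)} = 1

/-- `P(A = 1 | do(S = s), do(D = d)) = P(A = 1 | do(D = d))` for every `d` and `s`. -/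
def InterventionallyFair (μ : Measure Ω) (S : Ω → Bool) (UA : Ω → 𝓤)
    (fA : Bool → 𝓓 → 𝓤 → Bool) : Prop :=
  ∀ d s, μ {ω | fA s d (UA ω) = true} = μ {ω | fA (S ω) d (UA ω) = true}

theorem measurable_apply_of_countable {α β : Type*} [MeasurableSpace α] [Countable α]
    [MeasurableSingletonClass α] [MeasurableSpace β] {X : Ω → α} (hX : Measurable X)
    {g : α → Ω → β} (hg : ∀ a, Measurable (g a)) : Measurable fun ω => g (X ω) ω :=
  (measurable_from_prod_countable_right (f := fun p : α × Ω => g p.1 p.2) hg).comp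
    (hX.prodMk measurable_id)

theorem measure_setOf_eq_congr_of_measure_setOf_eq_eq_one {β : Type*} [MeasurableSpace β]
    [MeasurableEq β] {μ : Measure Ω} [IsProbabilityMeasure μ] {f g : Ω → β}
    (hf : Measurable f) (hg : Measurable g) (h : μ {ω | f ω = g ω} = 1) (b : β) :
    μ {ω | f ω = b} = μ {ω | g ω = b} := by
  have hae : ∀ᵐ ω ∂μ, f ω = g ω :=
    (ae_iff_measure_eq (measurableSet_eq_fun hf hg).nullMeasurableSet).2 (by rw [h, measure_univ])
  exact measure_congr (hae.mono fun ω hω => congrArg (· = b) hω)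

theorem CounterfactuallyFair.interventionallyFair {μ : Measure Ω} [IsProbabilityMeasure μ]
    {S : Ω → Bool} {UA : Ω → 𝓤} {fA : Bool → 𝓓 → 𝓤 → Bool} (hS : Measurable S)
    (hfA : ∀ s d, Measurable fun ω => fA s d (UA ω)) (hcf : CounterfactuallyFair μ S UA fA) :
    InterventionallyFair μ S UA fA := fun d s =>
  measure_setOf_eq_congr_of_measure_setOf_eq_eq_one (hfA s d)
    (measurable_apply_of_countable hS fun s => hfA s d) (hcf d s) true

theorem PMF.toMeasure_uniformOfFintype_setOf_xor_eq_true (a : Bool) :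
    (PMF.uniformOfFintype Bool).toMeasure {ω | xor a ω = true} = 2⁻¹ := by
  have hset : {ω | xor a ω = true} = {!a} := by
    ext ω; cases a <;> cases ω <;> simp
  rw [hset, PMF.toMeasure_apply_singleton _ _ (measurableSet_singleton _),
    PMF.uniformOfFintype_apply, Fintype.card_bool, Nat.cast_ofNat]

theorem interventionallyFair_xor_coin (s₀ : Bool) :
    InterventionallyFair (PMF.uniformOfFintype Bool).toMeasure (fun _ => s₀) id
      (fun s d u => xor (xor s d) u) := fun d s => by
  simp only [id, PMF.toMeasure_uniformOfFintype_setOf_xor_eq_true]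

theorem not_counterfactuallyFair_xor {μ : Measure Ω} [IsProbabilityMeasure μ] {S : Ω → Bool}
    (hS : Measurable S) (UA : Ω → Bool) :
    ¬ CounterfactuallyFair μ S UA (fun s d u => xor (xor s d) u) := by
  intro hcf
  have hS_eq : ∀ s, μ {ω | S ω = s} = 1 := fun s => by
    simpa [eq_comm] using hcf false s
  have hfalse : {ω | S ω = false} = {ω | S ω = true}ᶜ := by
    ext ω; simp
  have hcompl : μ {ω | S ω = true}ᶜ = 1 - μ {ω | S ω = true} :=
    prob_compl_eq_one_sub (hS (measurableSet_singleton true))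
  rw [← hfalse, hS_eq, hS_eq, tsub_self] at hcompl
  exact one_ne_zero hcompl

end Fairness

/-- In the no-confounding model class, counterfactual fairness implies
interventional fairness; the converse fails, as witnessed by an SCM with
`D = S ⊕ U_D` and `A = S ⊕ D ⊕ U_A`. -/
theorem stmt8 :
    (∀ (Ω 𝓓 𝓤A : Type) (_ : MeasurableSpace Ω)
       (μ : Measure Ω) (_ : IsProbabilityMeasure μ)
       (S : Ω → Bool) (UA : Ω → 𝓤A) (fA : Bool → 𝓓 → 𝓤A → Bool),
       Measurable S →
       (∀ (s : Bool) (d : 𝓓), Measurable (fun ω => fA s d (UA ω))) →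
       (∀ (d : 𝓓) (s : Bool), μ {ω | fA s d (UA ω) = fA (S ω) d (UA ω)} = 1) →
       (∀ (d : 𝓓) (s : Bool),
          μ {ω | fA s d (UA ω) = true} = μ {ω | fA (S ω) d (UA ω) = true}))
    ∧ (∃ (Ω : Type) (_ : MeasurableSpace Ω)
        (μ : Measure Ω) (_ : IsProbabilityMeasure μ)
        (S UD UA : Ω → Bool) (D : Ω → Bool) (fA : Bool → Bool → Bool → Bool),
        Measurable S ∧ Measurable UD ∧ Measurable UA ∧
        IndepFun S UA μ ∧
        (∀ ω, D ω = xor (S ω) (UD ω)) ∧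
        (fA = fun s d u => xor (xor s d) u) ∧
        (∀ (d s : Bool),
          μ {ω | fA s d (UA ω) = true} = μ {ω | fA (S ω) d (UA ω) = true}) ∧
        ¬ (∀ (d s : Bool), μ {ω | fA s d (UA ω) = fA (S ω) d (UA ω)} = 1)) := by
  exact ⟨fun _ _ _ _ _ _ _ _ _ hS hfA hcf => CounterfactuallyFair.interventionallyFair hS hfA hcf,
    Bool, inferInstance, (PMF.uniformOfFintype Bool).toMeasure, inferInstance,
    fun _ => true, fun _ => false, id, fun _ => true, fun s d u => xor (xor s d) u,
    measurable_const, measurable_const, measurable_id, indepFun_const_left true id,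
    fun _ => rfl, rfl, interventionallyFair_xor_coin true,
    not_counterfactuallyFair_xor measurable_const id⟩
end

section
/- In M_no-cf, interventional fairness implies the observational fairness notion: if for all d, s, P(f_A(s,d,U_A)=1) = P(f_A(S,d,U_A)=1), then for all d, s with P(D=d, S=s) > 0, P(A=1 | S=s, D=d) = P(A=1 | D=d) (equivalently A ⟂ S | D). Moreover, if P(S=s, D=d) > 0 for all s, d, the two notions are equivalent. -/
open MeasureTheory ProbabilityTheory
open scoped ENNReal

/-- In the no-confounding model class, interventional fairness implies the
observational fairness notion (`A ⟂ S | D` on positive-probability cells);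
moreover, under full positivity the two notions are equivalent. -/
theorem stmt9 {Ω 𝓓 𝓤A : Type*} [MeasurableSpace Ω]
    [MeasurableSpace 𝓓] [MeasurableSingletonClass 𝓓] [MeasurableSpace 𝓤A]
    (μ : Measure Ω) [IsProbabilityMeasure μ]
    (S : Ω → Bool) (D : Ω → 𝓓) (UA : Ω → 𝓤A)
    (fA : Bool → 𝓓 → 𝓤A → Bool) (A : Ω → Bool)
    (hA : ∀ ω, A ω = fA (S ω) (D ω) (UA ω))
    (hS : Measurable S) (hD : Measurable D) (hUA : Measurable UA)
    (hfA : ∀ s d, Measurable (fA s d))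
    (hindep : IndepFun (fun ω => (S ω, D ω)) UA μ) :
    ((∀ (d : 𝓓) (s : Bool),
        μ {ω | fA s d (UA ω) = true} = μ {ω | fA (S ω) d (UA ω) = true}) →
      (∀ (d : 𝓓) (s : Bool), 0 < μ {ω | S ω = s ∧ D ω = d} →
        μ {ω | A ω = true ∧ S ω = s ∧ D ω = d} / μ {ω | S ω = s ∧ D ω = d}
          = μ {ω | A ω = true ∧ D ω = d} / μ {ω | D ω = d}))
    ∧ ((∀ (s : Bool) (d : 𝓓), 0 < μ {ω | S ω = s ∧ D ω = d}) →
        ((∀ (d : 𝓓) (s : Bool),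
            μ {ω | fA s d (UA ω) = true} = μ {ω | fA (S ω) d (UA ω) = true}) ↔
         (∀ (d : 𝓓) (s : Bool),
            μ {ω | A ω = true ∧ S ω = s ∧ D ω = d} / μ {ω | S ω = s ∧ D ω = d}
              = μ {ω | A ω = true ∧ D ω = d} / μ {ω | D ω = d}))) := by
  have hSD : Measurable (fun ω => (S ω, D ω)) := hS.prodMk hD
  -- abbreviations
  set p : Bool → 𝓓 → ℝ≥0∞ := fun s d => μ {ω | fA s d (UA ω) = true} with hp
  set r : Bool → 𝓓 → ℝ≥0∞ := fun s d => μ {ω | S ω = s ∧ D ω = d} with hr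
  set q : Bool → ℝ≥0∞ := fun s => μ {ω | S ω = s} with hq
  -- independence key
  have key : ∀ (B : Set (Bool × 𝓓)), MeasurableSet B → ∀ (s : Bool) (d : 𝓓),
      μ ((fun ω => (S ω, D ω)) ⁻¹' B ∩ {ω | fA s d (UA ω) = true})
        = μ ((fun ω => (S ω, D ω)) ⁻¹' B) * p s d := by
    intro B hB s d
    exact hindep.measure_inter_preimage_eq_mul B (fA s d ⁻¹' {true}) hB
      ((hfA s d) (measurableSet_singleton true))
  have hcelleq : ∀ (s : Bool) (d : 𝓓),
      {ω | S ω = s ∧ D ω = d} = (fun ω => (S ω, D ω)) ⁻¹' ({s} ×ˢ {d}) := by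
    intro s d; ext ω; simp [Set.mem_prod]
  have hcell : ∀ (s s' : Bool) (d d' : 𝓓),
      μ ({ω | S ω = s ∧ D ω = d} ∩ {ω | fA s' d' (UA ω) = true})
        = r s d * p s' d' := by
    intro s s' d d'
    rw [hr]; simp only
    rw [hcelleq]
    exact key _ ((measurableSet_singleton s).prod (measurableSet_singleton d)) s' d'
  have hScell : ∀ (s s' : Bool) (d : 𝓓),
      μ ({ω | S ω = s} ∩ {ω | fA s' d (UA ω) = true}) = q s * p s' d := by
    intro s s' d
    have h1 : {ω | S ω = s} = (fun ω => (S ω, D ω)) ⁻¹' ({s} ×ˢ Set.univ) := by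
      ext ω; simp [eq_comm]
    rw [hq]; simp only
    rw [h1]
    exact key _ ((measurableSet_singleton s).prod MeasurableSet.univ) s' d
  -- measurability of elementary sets
  have hmUA : ∀ (s : Bool) (d : 𝓓), MeasurableSet {ω | fA s d (UA ω) = true} :=
    fun s d => ((hfA s d).comp hUA) (measurableSet_singleton true)
  have hmCell : ∀ (s : Bool) (d : 𝓓), MeasurableSet {ω | S ω = s ∧ D ω = d} := by
    intro s d
    rw [hcelleq]
    exact hSD ((measurableSet_singleton s).prod (measurableSet_singleton d))
  have hmS : ∀ (s : Bool), MeasurableSet {ω | S ω = s} :=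
    fun s => hS (measurableSet_singleton s)
  -- joint law of (A, S, D) cells
  have hAcellSet : ∀ (s : Bool) (d : 𝓓),
      {ω | A ω = true ∧ S ω = s ∧ D ω = d}
        = {ω | S ω = s ∧ D ω = d} ∩ {ω | fA s d (UA ω) = true} := by
    intro s d; ext ω
    simp only [Set.mem_setOf_eq, Set.mem_inter_iff, hA ω]
    constructor
    · rintro ⟨h1, h2, h3⟩; subst h2; subst h3; exact ⟨⟨rfl, rfl⟩, h1⟩
    · rintro ⟨⟨h2, h3⟩, h1⟩; subst h2; subst h3; exact ⟨h1, rfl, rfl⟩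
  have hAcell : ∀ (s : Bool) (d : 𝓓),
      μ {ω | A ω = true ∧ S ω = s ∧ D ω = d} = r s d * p s d := by
    intro s d; rw [hAcellSet]; exact hcell s s d d
  -- decomposition over S for {A = 1 ∧ D = d}
  have hAdSet : ∀ d : 𝓓,
      {ω | A ω = true ∧ D ω = d}
        = {ω | A ω = true ∧ S ω = true ∧ D ω = d}
          ∪ {ω | A ω = true ∧ S ω = false ∧ D ω = d} := by
    intro d; ext ω
    simp only [Set.mem_setOf_eq, Set.mem_union]
    cases h : S ω <;> simp [h]
  have hAd : ∀ d : 𝓓,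
      μ {ω | A ω = true ∧ D ω = d} = r true d * p true d + r false d * p false d := by
    intro d
    rw [hAdSet, measure_union, hAcell, hAcell]
    · rw [Set.disjoint_left]
      rintro ω ⟨_, h1, _⟩ ⟨_, h2, _⟩
      rw [h1] at h2; exact Bool.noConfusion h2
    · rw [hAcellSet]; exact (hmCell false d).inter (hmUA false d)
  -- decomposition of {D = d}
  have hDd : ∀ d : 𝓓, μ {ω | D ω = d} = r true d + r false d := by
    intro d
    have hset : {ω | D ω = d}
        = {ω | S ω = true ∧ D ω = d} ∪ {ω | S ω = false ∧ D ω = d} := by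
      ext ω
      simp only [Set.mem_setOf_eq, Set.mem_union]
      cases h : S ω <;> simp [h]
    rw [hset, measure_union]
    · rw [Set.disjoint_left]
      rintro ω ⟨h1, _⟩ ⟨h2, _⟩
      rw [h1] at h2; exact Bool.noConfusion h2
    · exact hmCell false d
  -- decomposition of the "mixed" intervention event
  have hFd : ∀ d : 𝓓,
      μ {ω | fA (S ω) d (UA ω) = true} = q true * p true d + q false * p false d := by
    intro d
    have hset : {ω | fA (S ω) d (UA ω) = true}
        = ({ω | S ω = true} ∩ {ω | fA true d (UA ω) = true})
          ∪ ({ω | S ω = false} ∩ {ω | fA false d (UA ω) = true}) := by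
      ext ω
      simp only [Set.mem_setOf_eq, Set.mem_union, Set.mem_inter_iff]
      cases h : S ω <;> simp [h]
    rw [hset, measure_union, hScell, hScell]
    · rw [Set.disjoint_left]
      rintro ω ⟨h1, _⟩ ⟨h2, _⟩
      simp only [Set.mem_setOf_eq] at h1 h2
      rw [h1] at h2; exact Bool.noConfusion h2
    · exact (hmS false).inter (hmUA false d)
  -- total mass of S
  have hq1 : q true + q false = 1 := by
    have hset : {ω | S ω = true} ∪ {ω | S ω = false} = Set.univ := by
      ext ω
      simp only [Set.mem_union, Set.mem_setOf_eq, Set.mem_univ, iff_true]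
      cases h : S ω <;> simp
    have hdisj : Disjoint {ω | S ω = true} {ω | S ω = false} := by
      rw [Set.disjoint_left]
      rintro ω h1 h2
      rw [Set.mem_setOf_eq] at h1 h2; rw [h1] at h2; exact Bool.noConfusion h2
    have h := measure_union (μ := μ) hdisj (hmS false)
    rw [hset, measure_univ] at h
    exact h.symm
  have hfin : ∀ (s : Bool) (d : 𝓓), r s d ≠ ⊤ := fun s d => measure_ne_top μ _
  -- core: if p is constant in s at d, then conditional probabilities agree
  have hfwd : ∀ (d : 𝓓) (s : Bool), p true d = p false d →
      0 < r s d →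
      μ {ω | A ω = true ∧ S ω = s ∧ D ω = d} / r s d
        = μ {ω | A ω = true ∧ D ω = d} / μ {ω | D ω = d} := by
    intro d s hps hpos
    have hm0 : μ {ω | D ω = d} ≠ 0 := by
      rw [hDd]
      intro h
      rcases add_eq_zero.mp h with ⟨h1, h2⟩
      cases s
      · exact absurd h2 hpos.ne'
      · exact absurd h1 hpos.ne'
    have hmfin : μ {ω | D ω = d} ≠ ⊤ := measure_ne_top μ _
    have hconst : ∀ s' : Bool, p s' d = p true d := by
      intro s'; cases s' <;> simp [hps]
    rw [hAcell, hAd, hconst s, hDd]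
    rw [hconst false, mul_comm (r s d) (p true d),
      mul_div_assoc, ENNReal.div_self hpos.ne' (hfin s d), mul_one]
    rw [← add_mul, mul_comm (r true d + r false d) (p true d), mul_div_assoc]
    rw [hDd] at hm0 hmfin
    rw [ENNReal.div_self hm0 hmfin, mul_one]
  constructor
  · -- interventional fairness ⇒ observational fairness
    intro hIF d s hpos
    have hps : p true d = p false d := (hIF d true).trans (hIF d false).symm
    exact hfwd d s hps hpos
  · intro hpos
    constructor
    · intro hIF d s
      have hps : p true d = p false d := (hIF d true).trans (hIF d false).symm
      exact hfwd d s hps (hpos s d)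
    · -- observational ⇒ interventional, under positivity
      intro hOF d s
      -- extract p s' d from the conditional probability
      have hval : ∀ s' : Bool,
          p s' d = μ {ω | A ω = true ∧ D ω = d} / μ {ω | D ω = d} := by
        intro s'
        have h := hOF d s'
        rw [hAcell] at h
        rw [show μ {ω | S ω = s' ∧ D ω = d} = r s' d from rfl,
          mul_comm (r s' d) (p s' d), mul_div_assoc,
          ENNReal.div_self (hpos s' d).ne' (hfin s' d), mul_one] at h
        exact h
      rw [hFd, hval true, hval false, ← add_mul, hq1, one_mul]
      exact hval s
end

section
/- There exists an SCM in M_no-cf satisfying the observational fairness notion (A ⟂ S | D) but not the interventional fairness notion: take U_S = 0, U_D = 0, U_A ~ Ber(ε) with ε ∈ [0, 1/2), and S = 0, D = 0, A = S ⊕ U_A. Then A ⟂ S | D holds, yet P(A=1 | do(S=1), do(D=d)) = 1−ε ≠ ε = P(A=1 | do(D=d)) for all d. -/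
/-!
Both `S` and `D` are constant, so conditioning on them is vacuous and `A ⟂ S | D` holds for
trivial reasons. Intervening on `S`, however, flips `A = S ⊕ U_A`, which moves `P(A = 1)` from
`ε` to `1 - ε`; these differ because `ε < 1/2`.
-/

open MeasureTheory ProbabilityTheory unitInterval
open scoped ENNReal

theorem ENNReal.lt_one_sub_self_of_lt_half {ε : ℝ≥0∞} (hε : ε < 1 / 2) : ε < 1 - ε :=
  lt_tsub_iff_right.mpr (ENNReal.add_halves 1 ▸ ENNReal.add_lt_add hε hε)

namespace unitInterval

def ofENNReal (ε : ℝ≥0∞) (hε : ε ≤ 1) : I :=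
  ⟨ε.toReal, ENNReal.toReal_nonneg, ENNReal.toReal_le_of_le_ofReal zero_le_one (by simpa using hε)⟩

variable {ε : ℝ≥0∞} (hε : ε ≤ 1)

theorem coe_toNNReal_ofENNReal : (toNNReal (ofENNReal ε hε) : ℝ≥0∞) = ε :=
  ENNReal.coe_toNNReal (ne_top_of_le_ne_top ENNReal.one_ne_top hε)

theorem coe_toNNReal_symm_ofENNReal : (toNNReal (σ (ofENNReal ε hε)) : ℝ≥0∞) = 1 - ε := by
  refine ENNReal.eq_sub_of_add_eq (ne_top_of_le_ne_top ENNReal.one_ne_top hε) ?_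
  have h := congrArg ((↑) : NNReal → ℝ≥0∞) (toNNReal_symm_add_toNNReal (ofENNReal ε hε))
  rwa [ENNReal.coe_add, coe_toNNReal_ofENNReal, ENNReal.coe_one] at h

end unitInterval

section Bernoulli

variable {ε : ℝ≥0∞} (hε : ε ≤ 1)

theorem bernoulliMeasure_ofENNReal_singleton_true :
    Ber(true, false, ofENNReal ε hε) {true} = ε := by
  rw [bernoulliMeasure_apply_of_mem_of_notMem _ (measurableSet_singleton _) rfl (by simp),
    coe_toNNReal_ofENNReal]

theorem bernoulliMeasure_ofENNReal_singleton_false :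
    Ber(true, false, ofENNReal ε hε) {false} = 1 - ε := by
  rw [bernoulliMeasure_apply_of_notMem_of_mem _ (measurableSet_singleton _) (by simp) rfl,
    coe_toNNReal_symm_ofENNReal]

end Bernoulli

theorem measure_and_mul_measure_eq_of_forall_eq {Ω α β γ : Type*} [MeasurableSpace Ω]
    (μ : Measure Ω) (A : Ω → α) (S : Ω → β) (D : Ω → γ) {s₀ : β} (hS : ∀ ω, S ω = s₀)
    (a : α) (s : β) (d : γ) :
    μ {ω | A ω = a ∧ S ω = s ∧ D ω = d} * μ {ω | D ω = d}
      = μ {ω | A ω = a ∧ D ω = d} * μ {ω | S ω = s ∧ D ω = d} := by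
  by_cases hs : s = s₀
  · simp [hS, hs, mul_comm]
  · simp [hS, Ne.symm hs]

/-- There exists an SCM in the no-confounding model class satisfying the
observational fairness notion (`A ⟂ S | D`) but not the interventional one:
take `S = 0`, `D = 0`, `A = S ⊕ U_A` with `U_A ~ Ber(ε)`, `ε ∈ [0, 1/2)`;
then `P(A=1 | do(S=1), do(D=d)) = 1−ε ≠ ε = P(A=1 | do(D=d))`. -/
theorem stmt10 : ∀ ε : ℝ≥0∞, ε < 1/2 →
    ∃ (Ω : Type) (_ : MeasurableSpace Ω)
      (μ : Measure Ω) (_ : IsProbabilityMeasure μ)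
      (S D UA : Ω → Bool) (fA : Bool → Bool → Bool → Bool) (A : Ω → Bool),
      μ {ω | UA ω = true} = ε ∧
      (∀ ω, S ω = false) ∧ (∀ ω, D ω = false) ∧
      (fA = fun s _ u => xor s u) ∧
      (∀ ω, A ω = fA (S ω) (D ω) (UA ω)) ∧
      (∀ (a s d : Bool),
        μ {ω | A ω = a ∧ S ω = s ∧ D ω = d} * μ {ω | D ω = d}
          = μ {ω | A ω = a ∧ D ω = d} * μ {ω | S ω = s ∧ D ω = d}) ∧
      (∀ d : Bool,
        μ {ω | fA true d (UA ω) = true} = 1 - ε ∧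
        μ {ω | fA (S ω) d (UA ω) = true} = ε) ∧
      (1 - ε ≠ ε) := by
  intro ε hε
  have hε₁ : ε ≤ 1 := hε.le.trans (by norm_num)
  refine ⟨Bool, inferInstance, Ber(true, false, ofENNReal ε hε₁), inferInstance,
    fun _ => false, fun _ => false, id, fun s _ u => xor s u, fun ω => xor false ω,
    bernoulliMeasure_ofENNReal_singleton_true hε₁, fun _ => rfl, fun _ => rfl, rfl, fun _ => rfl,
    measure_and_mul_measure_eq_of_forall_eq _ _ _ _ fun _ => rfl,
    fun _ => ⟨?_, ?_⟩, (ENNReal.lt_one_sub_self_of_lt_half hε).ne'⟩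
  · simpa using bernoulliMeasure_ofENNReal_singleton_false hε₁
  · simpa using bernoulliMeasure_ofENNReal_singleton_true hε₁
end

section
/- For the no-confounding model class, the sets of observational distributions induced by the four fairness null hypotheses (graphical, counterfactual, interventional, observational) coincide: each equals the set of joint distributions P(S,D,A) factorizing as P(S) ⊗ P(D|S) ⊗ P(A|D) (i.e., satisfying A ⟂ S | D). In particular, any distribution with A ⟂ S | D is realized by an SCM in which S is not a parent of A. -/
open MeasureTheory ProbabilityTheory
open scoped ENNReal

/-- Conditional independence `A ⟂ S | D` for a joint distribution on
`(S, D, A)`, expressed in product form. -/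
def ObsCI {𝓓 : Type} [MeasurableSpace 𝓓]
    (P : Measure (Bool × 𝓓 × Bool)) : Prop :=
  ∀ (s : Bool) (d : 𝓓) (a : Bool),
    P {v | v.1 = s ∧ v.2.1 = d ∧ v.2.2 = a} * P {v | v.2.1 = d}
      = P {v | v.2.1 = d ∧ v.2.2 = a} * P {v | v.1 = s ∧ v.2.1 = d}

/-- `P` is the observational distribution of an SCM in the no-confounding
model class satisfying the given fairness property of the structural
function `f_A` and the random variables. -/
def RealizableNoCf {𝓓 : Type} [MeasurableSpace 𝓓]
    (P : Measure (Bool × 𝓓 × Bool))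
    (fair : ∀ {Ω 𝓤A : Type} [MeasurableSpace Ω], Measure Ω →
        (Ω → Bool) → (Ω → 𝓓) → (Ω → 𝓤A) →
        (Bool → 𝓓 → 𝓤A → Bool) → Prop) : Prop :=
  ∃ (Ω 𝓤A : Type) (_ : MeasurableSpace Ω) (_ : MeasurableSpace 𝓤A)
    (μ : Measure Ω) (_ : IsProbabilityMeasure μ)
    (S : Ω → Bool) (D : Ω → 𝓓) (UA : Ω → 𝓤A)
    (fA : Bool → 𝓓 → 𝓤A → Bool),
    Measurable S ∧ Measurable D ∧ Measurable UA ∧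
    (∀ s d, Measurable (fA s d)) ∧
    IndepFun (fun ω => (S ω, D ω)) UA μ ∧
    fair μ S D UA fA ∧
    Measure.map (fun ω => (S ω, D ω, fA (S ω) (D ω) (UA ω))) μ = P

/-!
If the law of `f_A(s, d, U_A)` does not depend on `s`, then independence of `U_A` from `(S, D)`
makes every cell factor as `P(S = s, D = d, A = 1) = P(S = s, D = d) · q(d)`, and summing over `s`
identifies `q(d)` with `P(A = 1 | D = d)`: this is `A ⟂ S | D`. The graphical, counterfactual and
interventional hypotheses each force this invariance, and the observational one is `A ⟂ S | D`
itself. Conversely, given `A ⟂ S | D`, take `U_A` to be a random response function `d ↦ A`,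
independent of `(S, D)`, whose value at `d` has the conditional law of `A` given `D = d`, and
`f_A(s, d, u) = u(d)`: `S` is not an argument of `f_A`, so all four hypotheses hold.
-/

theorem measurable_comp₂_of_countable {Ω α β γ : Type*} [MeasurableSpace Ω] [MeasurableSpace α]
    [MeasurableSpace β] [MeasurableSpace γ] [Countable α] [MeasurableSingletonClass α]
    {f : α → β → γ} (hf : ∀ a, Measurable (f a)) {X : Ω → α} {Y : Ω → β}
    (hX : Measurable X) (hY : Measurable Y) : Measurable fun ω => f (X ω) (Y ω) :=
  (measurable_from_prod_countable_right (f := fun p : α × β => f p.1 p.2) hf).comp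
    (hX.prodMk hY)

theorem measure_setOf_eq_congr {Ω β : Type*} [MeasurableSpace Ω] {μ : Measure Ω} {f g : Ω → β}
    (h : f =ᵐ[μ] g) (b : β) : μ {ω | f ω = b} = μ {ω | g ω = b} :=
  measure_congr (h.mono fun _ hω => congrArg (· = b) hω)

section BoolSplit

variable {α : Type*} [MeasurableSpace α] (μ : Measure α) {b : α → Bool}
  (hb : MeasurableSet {x | b x = true}) (p : α → Prop)
include hb

theorem measure_setOf_eq_add_bool :
    μ {x | p x} = μ {x | b x = true ∧ p x} + μ {x | b x = false ∧ p x} := by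
  rw [← measure_inter_add_sdiff {x | p x} hb]
  congr 2 <;> ext x <;> simp [and_comm]

theorem measure_setOf_eq_add_bool' :
    μ {x | p x} = μ {x | p x ∧ b x = true} + μ {x | p x ∧ b x = false} := by
  rw [← measure_inter_add_sdiff {x | p x} hb]
  congr 2
  ext x
  simp

end BoolSplit

section ObsCI

variable {𝓓 : Type} [MeasurableSpace 𝓓] {P : Measure (Bool × 𝓓 × Bool)}

theorem measure_cell_eq_zero {s : Bool} {d : 𝓓} (h : P {v | v.1 = s ∧ v.2.1 = d} = 0)
    (a : Bool) : P {v | v.1 = s ∧ v.2.1 = d ∧ v.2.2 = a} = 0 :=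
  measure_mono_null (fun _ => And.imp_right And.left) h

variable [IsFiniteMeasure P]

theorem obsCI_of_forall_true
    (h : ∀ s d, P {v | v.1 = s ∧ v.2.1 = d ∧ v.2.2 = true} * P {v | v.2.1 = d}
      = P {v | v.2.1 = d ∧ v.2.2 = true} * P {v | v.1 = s ∧ v.2.1 = d}) : ObsCI P := by
  intro s d a
  cases a
  case true => exact h s d
  have hA : MeasurableSet {v : Bool × 𝓓 × Bool | v.2.2 = true} :=
    measurable_snd.snd (measurableSet_singleton true)
  have split_sd := measure_setOf_eq_add_bool' P hA (fun v => v.1 = s ∧ v.2.1 = d)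
  have split_d := measure_setOf_eq_add_bool' P hA (fun v => v.2.1 = d)
  simp only [and_assoc] at split_sd
  set x := P {v | v.1 = s ∧ v.2.1 = d ∧ v.2.2 = true}
  set b := P {v | v.1 = s ∧ v.2.1 = d}
  set z := P {v | v.2.1 = d ∧ v.2.2 = true}
  set c := P {v | v.2.1 = d}
  have : x * c + P {v | v.1 = s ∧ v.2.1 = d ∧ v.2.2 = false} * c
      = x * c + P {v | v.2.1 = d ∧ v.2.2 = false} * b := by
    calc _ = b * c := by rw [split_sd, add_mul]
      _ = b * z + b * P {v | v.2.1 = d ∧ v.2.2 = false} := by rw [split_d, mul_add]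
      _ = _ := by rw [h s d]; ring
  exact (ENNReal.add_right_inj (by finiteness)).1 this

theorem obsCI_of_cell_eq_mul (q : 𝓓 → ℝ≥0∞)
    (h : ∀ s d, P {v | v.1 = s ∧ v.2.1 = d ∧ v.2.2 = true} = P {v | v.1 = s ∧ v.2.1 = d} * q d) :
    ObsCI P := by
  refine obsCI_of_forall_true fun s d => ?_
  have hS : MeasurableSet {v : Bool × 𝓓 × Bool | v.1 = true} :=
    measurable_fst (measurableSet_singleton true)
  have hdA : P {v | v.2.1 = d ∧ v.2.2 = true} = P {v | v.2.1 = d} * q d := by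
    rw [measure_setOf_eq_add_bool P hS, measure_setOf_eq_add_bool P hS (fun v => v.2.1 = d), h, h,
      add_mul]
  rw [h, hdA]
  ring

theorem obsCI_iff_forall_div_eq : ObsCI P ↔ ∀ (d : 𝓓) (s : Bool),
    0 < P {v | v.1 = s ∧ v.2.1 = d} →
      P {v | v.2.2 = true ∧ v.1 = s ∧ v.2.1 = d} / P {v | v.1 = s ∧ v.2.1 = d}
        = P {v | v.2.2 = true ∧ v.2.1 = d} / P {v | v.2.1 = d} := by
  have e_sdA : ∀ s d, {v : Bool × 𝓓 × Bool | v.2.2 = true ∧ v.1 = s ∧ v.2.1 = d}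
      = {v | v.1 = s ∧ v.2.1 = d ∧ v.2.2 = true} := fun _ _ => Set.ext fun _ => and_rotate
  have e_dA : ∀ d, {v : Bool × 𝓓 × Bool | v.2.2 = true ∧ v.2.1 = d}
      = {v | v.2.1 = d ∧ v.2.2 = true} := fun _ => Set.ext fun _ => and_comm
  have hsd_le : ∀ s d, P {v | v.1 = s ∧ v.2.1 = d} ≤ P {v | v.2.1 = d} :=
    fun _ _ => measure_mono fun _ hv => hv.2
  simp only [e_sdA, e_dA]
  constructor
  · intro hP d s hpos
    rw [ENNReal.div_eq_div_iff (hpos.trans_le (hsd_le s d)).ne' (measure_ne_top _ _) hpos.ne'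
      (measure_ne_top _ _), mul_comm, hP s d true, mul_comm]
  · refine fun h => obsCI_of_forall_true fun s d => ?_
    rcases eq_zero_or_pos (P {v | v.1 = s ∧ v.2.1 = d}) with hzero | hpos
    · rw [hzero, measure_cell_eq_zero hzero, zero_mul, mul_zero]
    · have := (ENNReal.div_eq_div_iff (hpos.trans_le (hsd_le s d)).ne' (measure_ne_top _ _)
        hpos.ne' (measure_ne_top _ _)).1 (h d s hpos)
      rw [mul_comm, this, mul_comm]

theorem ObsCI.measure_cell_eq_mul_condDistrib [MeasurableSingletonClass 𝓓] (hP : ObsCI P)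
    (s : Bool) (d : 𝓓) (a : Bool) :
    P {v | v.1 = s ∧ v.2.1 = d ∧ v.2.2 = a}
      = P {v | v.1 = s ∧ v.2.1 = d} * condDistrib (fun v => v.2.2) (fun v => v.2.1) P d {a} := by
  by_cases hd : P {v | v.2.1 = d} = 0
  · have hsd : P {v | v.1 = s ∧ v.2.1 = d} = 0 := measure_mono_null (fun _ => And.right) hd
    rw [hsd, zero_mul, measure_cell_eq_zero hsd]
  have hD : P.map (fun v => v.2.1) {d} = P {v | v.2.1 = d} :=
    Measure.map_apply (by fun_prop) (measurableSet_singleton d)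
  have hDA : P.map (fun v => (v.2.1, v.2.2)) ({d} ×ˢ {a}) = P {v | v.2.1 = d ∧ v.2.2 = a} :=
    Measure.map_apply (by fun_prop) ((measurableSet_singleton d).prod (measurableSet_singleton a))
  rw [condDistrib_apply_of_ne_zero (by fun_prop) d (hD ▸ hd), hD, hDA]
  calc _ = P {v | v.1 = s ∧ v.2.1 = d ∧ v.2.2 = a} * P {v | v.2.1 = d} * (P {v | v.2.1 = d})⁻¹ := by
        rw [mul_assoc, ENNReal.mul_inv_cancel hd (measure_ne_top _ _), mul_one]
    _ = _ := by rw [hP s d a]; ring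

end ObsCI

section Realization

variable {𝓓 Ω 𝓤A : Type} [MeasurableSpace 𝓓] [MeasurableSingletonClass 𝓓] [Countable 𝓓]
  [MeasurableSpace Ω] [MeasurableSpace 𝓤A] {μ : Measure Ω}
  {S : Ω → Bool} {D : Ω → 𝓓} {UA : Ω → 𝓤A} {fA : Bool → 𝓓 → 𝓤A → Bool}

theorem measurable_structural (hS : Measurable S) (hD : Measurable D) (hUA : Measurable UA)
    (hfA : ∀ s d, Measurable (fA s d)) : Measurable fun ω => fA (S ω) (D ω) (UA ω) :=
  measurable_comp₂_of_countable (fun p : Bool × 𝓓 => hfA p.1 p.2) (hS.prodMk hD) hUA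

theorem obsCI_map_of_indepFun [IsFiniteMeasure μ] (hS : Measurable S) (hD : Measurable D)
    (hUA : Measurable UA) (hfA : ∀ s d, Measurable (fA s d))
    (hind : IndepFun (fun ω => (S ω, D ω)) UA μ)
    (hinv : ∀ d s s', μ {ω | fA s d (UA ω) = true} = μ {ω | fA s' d (UA ω) = true}) :
    ObsCI (μ.map fun ω => (S ω, D ω, fA (S ω) (D ω) (UA ω))) := by
  have hT := hS.prodMk (hD.prodMk (measurable_structural hS hD hUA hfA))
  refine obsCI_of_cell_eq_mul (fun d => μ {ω | fA true d (UA ω) = true}) fun s d => ?_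
  rw [Measure.map_apply hT .of_discrete, Measure.map_apply hT .of_discrete]
  have hcell : (fun ω => (S ω, D ω, fA (S ω) (D ω) (UA ω))) ⁻¹'
        {v | v.1 = s ∧ v.2.1 = d ∧ v.2.2 = true}
      = (fun ω => (S ω, D ω)) ⁻¹' {(s, d)} ∩ UA ⁻¹' (fA s d ⁻¹' {true}) := by
    ext ω
    simp only [Set.mem_preimage, Set.mem_inter_iff, Set.mem_singleton_iff, Prod.mk.injEq,
      Set.mem_ofPred_eq]
    constructor
    · rintro ⟨rfl, rfl, h⟩; exact ⟨⟨rfl, rfl⟩, h⟩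
    · rintro ⟨⟨rfl, rfl⟩, h⟩; exact ⟨rfl, rfl, h⟩
  rw [hcell, hind.measure_inter_preimage_eq_mul _ _ (measurableSet_singleton _)
    (hfA s d (measurableSet_singleton true)), hinv d true s]
  congr 2
  ext ω
  simp

theorem obsCI_map_iff [IsFiniteMeasure μ] {A : Ω → Bool} (hS : Measurable S) (hD : Measurable D)
    (hA : Measurable A) :
    ObsCI (μ.map fun ω => (S ω, D ω, A ω)) ↔ ∀ (d : 𝓓) (s : Bool),
      0 < μ {ω | S ω = s ∧ D ω = d} →
        μ {ω | A ω = true ∧ S ω = s ∧ D ω = d} / μ {ω | S ω = s ∧ D ω = d}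
          = μ {ω | A ω = true ∧ D ω = d} / μ {ω | D ω = d} := by
  rw [obsCI_iff_forall_div_eq]
  simp only [Measure.map_apply (hS.prodMk (hD.prodMk hA)) MeasurableSet.of_discrete]
  rfl

end Realization

section Fairness

variable {Ω 𝓓 𝓤A : Type} [MeasurableSpace Ω] [MeasurableSpace 𝓤A] {μ : Measure Ω}
  [IsProbabilityMeasure μ] {UA : Ω → 𝓤A} {fA : Bool → 𝓓 → 𝓤A → Bool}

theorem ae_eq_of_graphical (hUA : Measurable UA) (hfA : ∀ s d, Measurable (fA s d))
    {d : 𝓓} {s s' : Bool} (h : μ {ω | fA s d (UA ω) = fA s' d (UA ω)} = 1) :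
    (fun ω => fA s d (UA ω)) =ᵐ[μ] fun ω => fA s' d (UA ω) :=
  (mem_ae_iff_prob_eq_one
    (measurableSet_eq_fun ((hfA s d).comp hUA) ((hfA s' d).comp hUA))).2 h

theorem ae_eq_of_counterfactual {S : Ω → Bool} (hS : Measurable S) (hUA : Measurable UA)
    (hfA : ∀ s d, Measurable (fA s d)) {d : 𝓓}
    (h : ∀ s, μ {ω | fA s d (UA ω) = fA (S ω) d (UA ω)} = 1) (s s' : Bool) :
    (fun ω => fA s d (UA ω)) =ᵐ[μ] fun ω => fA s' d (UA ω) := by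
  have hae : ∀ s, (fun ω => fA s d (UA ω)) =ᵐ[μ] fun ω => fA (S ω) d (UA ω) := fun s =>
    (mem_ae_iff_prob_eq_one (measurableSet_eq_fun ((hfA s d).comp hUA)
      (measurable_comp₂_of_countable (fun s => hfA s d) hS hUA))).2 (h s)
  exact (hae s).trans (hae s').symm

end Fairness

section ResponseModel

variable {𝓓 : Type} [MeasurableSpace 𝓓] (P : Measure (Bool × 𝓓 × Bool)) [IsProbabilityMeasure P]

instance : IsProbabilityMeasure (P.map fun v => (v.1, v.2.1)) :=
  Measure.isProbabilityMeasure_map (by fun_prop)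

variable [Fintype 𝓓]

/-- `U_A` is a random response function `d ↦ A`, independent of `(S, D)`, with independent
coordinates, the coordinate at `d` having the law of `A` given `D = d`. -/
noncomputable def responseModel : Measure ((Bool × 𝓓) × (𝓓 → Bool)) :=
  (P.map fun v => (v.1, v.2.1)).prod (Measure.pi (condDistrib (fun v => v.2.2) (fun v => v.2.1) P))

instance : IsProbabilityMeasure (responseModel P) := by
  unfold responseModel
  infer_instance

variable [MeasurableSingletonClass 𝓓]

theorem measurable_response_apply :
    Measurable fun ω : (Bool × 𝓓) × (𝓓 → Bool) => ω.2 ω.1.2 :=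
  measurable_structural (fA := fun (_ : Bool) (d : 𝓓) (u : 𝓓 → Bool) => u d)
    measurable_fst.fst measurable_fst.snd measurable_snd fun _ d => measurable_pi_apply d

variable {P}

theorem ObsCI.map_responseModel (hP : ObsCI P) :
    (responseModel P).map (fun ω => (ω.1.1, ω.1.2, ω.2 ω.1.2)) = P := by
  refine Measure.ext_of_singleton fun ⟨s, d, a⟩ => ?_
  have hpre : (fun ω : (Bool × 𝓓) × (𝓓 → Bool) => (ω.1.1, ω.1.2, ω.2 ω.1.2)) ⁻¹' {(s, d, a)}
      = {(s, d)} ×ˢ ((Function.eval d : (𝓓 → Bool) → Bool) ⁻¹' {a}) := by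
    ext ⟨⟨s', d'⟩, u⟩
    simp only [Set.mem_preimage, Set.mem_singleton_iff, Prod.mk.injEq, Set.mem_prod,
      Function.eval]
    constructor
    · rintro ⟨rfl, rfl, rfl⟩; exact ⟨⟨rfl, rfl⟩, rfl⟩
    · rintro ⟨⟨rfl, rfl⟩, rfl⟩; exact ⟨rfl, rfl, rfl⟩
  have hSD : (fun v : Bool × 𝓓 × Bool => (v.1, v.2.1)) ⁻¹' {(s, d)}
      = {v | v.1 = s ∧ v.2.1 = d} := by
    ext; simp
  have hSDA : ({(s, d, a)} : Set (Bool × 𝓓 × Bool))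
      = {v | v.1 = s ∧ v.2.1 = d ∧ v.2.2 = a} := by
    ext; simp [Prod.ext_iff]
  rw [Measure.map_apply (measurable_fst.fst.prodMk (measurable_fst.snd.prodMk
      measurable_response_apply)) (measurableSet_singleton _), hpre, responseModel,
    Measure.prod_prod, Measure.map_apply (by fun_prop) (measurableSet_singleton _),
    (measurePreserving_eval _ d).measure_preimage (measurableSet_singleton a).nullMeasurableSet,
    hSD, ← hP.measure_cell_eq_mul_condDistrib, hSDA]

theorem ObsCI.realizableNoCf (hP : ObsCI P)
    {fair : ∀ {Ω 𝓤A : Type} [MeasurableSpace Ω], Measure Ω →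
        (Ω → Bool) → (Ω → 𝓓) → (Ω → 𝓤A) → (Bool → 𝓓 → 𝓤A → Bool) → Prop}
    (hfair : fair (responseModel P) (fun ω => ω.1.1) (fun ω => ω.1.2) (fun ω => ω.2)
      fun _ d u => u d) :
    RealizableNoCf P fair :=
  ⟨_, _, _, _, responseModel P, inferInstance, _, _, _, _, measurable_fst.fst, measurable_fst.snd,
    measurable_snd, fun _ d => measurable_pi_apply d, indepFun_prod measurable_id measurable_id,
    hfair, hP.map_responseModel⟩

end ResponseModel

/-- For the no-confounding model class, the sets of observational
distributions induced by the graphical, counterfactual, interventional and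
observational fairness null hypotheses all coincide with the set of joint
distributions satisfying `A ⟂ S | D`.  In particular any distribution with
`A ⟂ S | D` is realized by an SCM in which `S` is not a parent of `A`. -/
theorem stmt11 {𝓓 : Type} [MeasurableSpace 𝓓] [MeasurableSingletonClass 𝓓]
    [Fintype 𝓓] (P : Measure (Bool × 𝓓 × Bool)) [IsProbabilityMeasure P] :
    -- graphical: `S` is not a parent of `A`
    (RealizableNoCf P (fun μ _ _ UA fA =>
        ∀ (d : 𝓓) (s s' : Bool),
          μ {ω | fA s d (UA ω) = fA s' d (UA ω)} = 1) ↔ ObsCI P)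
    -- counterfactual: `A^{do(S=s,D=d)} = A^{do(D=d)}` a.s.
    ∧ (RealizableNoCf P (fun μ S _ UA fA =>
        ∀ (d : 𝓓) (s : Bool),
          μ {ω | fA s d (UA ω) = fA (S ω) d (UA ω)} = 1) ↔ ObsCI P)
    -- interventional: `P(A=1|do(S=s),do(D=d)) = P(A=1|do(D=d))`
    ∧ (RealizableNoCf P (fun μ S _ UA fA =>
        ∀ (d : 𝓓) (s : Bool),
          μ {ω | fA s d (UA ω) = true}
            = μ {ω | fA (S ω) d (UA ω) = true}) ↔ ObsCI P)
    -- observational: `P(A=1|S=s,D=d) = P(A=1|D=d)` on positive cells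
    ∧ (RealizableNoCf P (fun μ S D UA fA =>
        ∀ (d : 𝓓) (s : Bool), 0 < μ {ω | S ω = s ∧ D ω = d} →
          μ {ω | fA (S ω) (D ω) (UA ω) = true ∧ S ω = s ∧ D ω = d}
              / μ {ω | S ω = s ∧ D ω = d}
            = μ {ω | fA (S ω) (D ω) (UA ω) = true ∧ D ω = d}
              / μ {ω | D ω = d}) ↔ ObsCI P) := by
  refine ⟨⟨?_, fun hP => hP.realizableNoCf (by simp)⟩, ⟨?_, fun hP => hP.realizableNoCf (by simp)⟩,
    ⟨?_, fun hP => hP.realizableNoCf fun _ _ => rfl⟩, ⟨?_, fun hP => hP.realizableNoCf ?_⟩⟩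
  · rintro ⟨Ω, 𝓤A, _, _, μ, _, S, D, UA, fA, hS, hD, hUA, hfA, hind, hfair, rfl⟩
    exact obsCI_map_of_indepFun hS hD hUA hfA hind fun d s s' =>
      measure_setOf_eq_congr (ae_eq_of_graphical hUA hfA (hfair d s s')) true
  · rintro ⟨Ω, 𝓤A, _, _, μ, _, S, D, UA, fA, hS, hD, hUA, hfA, hind, hfair, rfl⟩
    exact obsCI_map_of_indepFun hS hD hUA hfA hind fun d s s' =>
      measure_setOf_eq_congr (ae_eq_of_counterfactual hS hUA hfA (hfair d) s s') true
  · rintro ⟨Ω, 𝓤A, _, _, μ, _, S, D, UA, fA, hS, hD, hUA, hfA, hind, hfair, rfl⟩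
    exact obsCI_map_of_indepFun hS hD hUA hfA hind fun d s s' =>
      (hfair d s).trans (hfair d s').symm
  · rintro ⟨Ω, 𝓤A, _, _, μ, _, S, D, UA, fA, hS, hD, hUA, hfA, -, hfair, rfl⟩
    exact (obsCI_map_iff hS hD (measurable_structural hS hD hUA hfA)).2 hfair
  · exact (obsCI_map_iff measurable_fst.fst measurable_fst.snd measurable_response_apply).1
      (by rwa [hP.map_responseModel])
end

section
/- In the confounded model class M_cf (S = f_S(U_S), D = f_D(S,U,U_D), A = f_A(S,D,U,U_A) with independent exogenous variables), the graphical fairness notion (S not a parent of A, i.e., f_A(s,d,U,U_A) constant in s a.s. for all d) is equivalent to the counterfactual fairness notion (for all s,d: f_A(s,d,U,U_A) = f_A(S,d,U,U_A) a.s.), and both strictly imply the interventional notion (for all s,d: P(f_A(s,d,U,U_A)=1) = P(f_A(S,d,U,U_A)=1)). -/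
open MeasureTheory ProbabilityTheory
open scoped ENNReal

/-!
Write `X s ω = f_A(s, d, U ω, U_A ω)` for a fixed `d`. Graphical fairness says that the potential
outcomes `X s` agree almost surely for all `s`; counterfactual fairness says that each `X s` agrees
almost surely with the factual outcome `X (S ω) ω`. Since `S` takes only countably many values,
the first gives `∀ᵐ ω, ∀ t, X s ω = X t ω`, which yields the second at `t = S ω`; conversely two
outcomes a.s. equal to the same one are a.s. equal to each other. Almost sure equality preserves
the law, which is interventional fairness. For strictness take `S` and `U_A` independent fair bits
and `A = S ⊕ D ⊕ U_A`: the fair bit `U_A` makes `A` a fair bit under every intervention, while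
`A^{do(S=s,D=d)}` and `A^{do(D=d)}` differ exactly when `S ≠ s`.
-/

section

variable {Ω ι β : Type*} [MeasurableSpace Ω] {μ : Measure Ω}

lemma measurable_select [MeasurableSpace ι] [Countable ι] [MeasurableSingletonClass ι]
    [MeasurableSpace β] {X : ι → Ω → β} {S : Ω → ι} (hX : ∀ i, Measurable (X i))
    (hS : Measurable S) : Measurable fun ω => X (S ω) ω :=
  (measurable_from_prod_countable_right (f := fun p : ι × Ω => X p.1 p.2) hX).comp
    (hS.prodMk measurable_id)

lemma forall_ae_eq_iff_forall_ae_eq_select [Countable ι] (X : ι → Ω → β) (S : Ω → ι) :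
    (∀ i j, X i =ᵐ[μ] X j) ↔ ∀ i, X i =ᵐ[μ] fun ω => X (S ω) ω := by
  refine ⟨fun h i => ?_, fun h i j => (h i).trans (h j).symm⟩
  filter_upwards [ae_all_iff.2 (h i)] with ω hω using hω (S ω)

lemma ae_eq_iff_measure_setOf_eq_eq_one [IsProbabilityMeasure μ] [MeasurableSpace β]
    [MeasurableEq β] {f g : Ω → β} (hf : Measurable f) (hg : Measurable g) :
    f =ᵐ[μ] g ↔ μ {ω | f ω = g ω} = 1 :=
  mem_ae_iff_prob_eq_one (measurableSet_eq_fun hf hg)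

variable [IsProbabilityMeasure μ] [MeasurableSpace ι] [Countable ι] [MeasurableSingletonClass ι]
  [MeasurableSpace β] [MeasurableEq β] {X : ι → Ω → β} {S : Ω → ι}

theorem graphical_iff_counterfactual (hX : ∀ i, Measurable (X i)) (hS : Measurable S) :
    (∀ i j, μ {ω | X i ω = X j ω} = 1) ↔ ∀ i, μ {ω | X i ω = X (S ω) ω} = 1 := by
  simp only [← ae_eq_iff_measure_setOf_eq_eq_one (hX _) (hX _),
    ← ae_eq_iff_measure_setOf_eq_eq_one (hX _) (measurable_select hX hS)]
  exact forall_ae_eq_iff_forall_ae_eq_select X S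

theorem interventional_of_counterfactual (hX : ∀ i, Measurable (X i)) (hS : Measurable S)
    (h : ∀ i, μ {ω | X i ω = X (S ω) ω} = 1) (i : ι) (t : Set β) :
    μ (X i ⁻¹' t) = μ ((fun ω => X (S ω) ω) ⁻¹' t) :=
  measure_congr <|
    ((ae_eq_iff_measure_setOf_eq_eq_one (hX i) (measurable_select hX hS)).2 (h i)).preimage t

end

lemma uniformOn_univ_setOf {Ω : Type*} [MeasurableSpace Ω] [Fintype Ω]
    [MeasurableSingletonClass Ω] (p : Ω → Prop) [DecidablePred p] :
    uniformOn Set.univ {ω | p ω} = (Finset.univ.filter p).card / Fintype.card Ω := by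
  rw [uniformOn_univ, ← Measure.count_apply_finset]
  simp

lemma uniformOn_xor_snd_eq_true (g : Bool → Bool) :
    uniformOn (Set.univ : Set (Bool × Bool)) {ω | xor (g ω.1) ω.2 = true} = 2⁻¹ := by
  have hcard : (Finset.univ.filter fun ω : Bool × Bool => xor (g ω.1) ω.2 = true).card = 2 := by
    revert g; decide
  rw [uniformOn_univ_setOf, hcard, Fintype.card_prod, Fintype.card_bool, Nat.cast_mul,
    ENNReal.div_eq_inv_mul, ENNReal.mul_inv (by simp) (by simp), mul_assoc,
    ENNReal.inv_mul_cancel (by simp) (by simp), mul_one, Nat.cast_ofNat]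

/-- In the confounded model class `M_cf` (`A = f_A(S,D,U,U_A)` with latent
confounder `U`), the graphical fairness notion is equivalent to the
counterfactual one, both imply the interventional notion, and the implication
is strict: there is an interventionally fair model that is not
counterfactually fair. -/
theorem stmt14 :
    (∀ (Ω 𝓓 𝓤 𝓤A : Type) (_ : MeasurableSpace Ω)
       (μ : Measure Ω) (_ : IsProbabilityMeasure μ)
       (S : Ω → Bool) (U : Ω → 𝓤) (UA : Ω → 𝓤A)
       (fA : Bool → 𝓓 → 𝓤 → 𝓤A → Bool),
       Measurable S →
       (∀ (s : Bool) (d : 𝓓), Measurable (fun ω => fA s d (U ω) (UA ω))) →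
       (((∀ (d : 𝓓) (s s' : Bool),
            μ {ω | fA s d (U ω) (UA ω) = fA s' d (U ω) (UA ω)} = 1) ↔
          (∀ (d : 𝓓) (s : Bool),
            μ {ω | fA s d (U ω) (UA ω) = fA (S ω) d (U ω) (UA ω)} = 1))
        ∧ ((∀ (d : 𝓓) (s : Bool),
            μ {ω | fA s d (U ω) (UA ω) = fA (S ω) d (U ω) (UA ω)} = 1) →
           (∀ (d : 𝓓) (s : Bool),
            μ {ω | fA s d (U ω) (UA ω) = true}
              = μ {ω | fA (S ω) d (U ω) (UA ω) = true}))))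
    ∧ (∃ (Ω : Type) (_ : MeasurableSpace Ω)
        (μ : Measure Ω) (_ : IsProbabilityMeasure μ)
        (S : Ω → Bool) (U : Ω → Bool) (UA : Ω → Bool)
        (fA : Bool → Bool → Bool → Bool → Bool),
        (∀ (d s : Bool),
          μ {ω | fA s d (U ω) (UA ω) = true}
            = μ {ω | fA (S ω) d (U ω) (UA ω) = true}) ∧
        ¬ (∀ (d s : Bool),
          μ {ω | fA s d (U ω) (UA ω) = fA (S ω) d (U ω) (UA ω)} = 1)) := by
  refine ⟨fun Ω 𝓓 𝓤 𝓤A _ μ _ S U UA fA hS hf =>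
    ⟨forall_congr' fun d => graphical_iff_counterfactual (fun s => hf s d) hS,
      fun h d s => interventional_of_counterfactual (fun s => hf s d) hS (h d) s {true}⟩, ?_⟩
  refine ⟨Bool × Bool, inferInstance, uniformOn Set.univ, inferInstance, Prod.fst, fun _ => false,
    Prod.snd, fun s d _ ua => xor (xor s d) ua, fun d s => ?_, fun h => ?_⟩
  · exact (uniformOn_xor_snd_eq_true fun _ => xor s d).trans
      (uniformOn_xor_snd_eq_true (xor · d)).symm
  · have hcard : (Finset.univ.filter fun ω : Bool × Bool =>
        xor (xor true false) ω.2 = xor (xor ω.1 false) ω.2).card = 2 := by decide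
    have hfair := h false true
    rw [uniformOn_univ_setOf, hcard, ENNReal.div_eq_one_iff (by simp) (by simp)] at hfair
    norm_num at hfair
end

section
/- Under the response-function parameterization of the confounded model (response variable R = (r_1: S ↦ D, r_2: S×D ↦ A) with distribution P̃), interventional fairness for all d is equivalent to the linear constraints: for all d, Σ_{(r_1,r_2)} (1[r_2(0,d)=1] − 1[r_2(1,d)=1]) P̃(r_1,r_2) = 0, assuming P(S=s) > 0 for both s. -/
/-- Under the response-function parameterization of the confounded model
(`R = (r₁ : S ↦ D, r₂ : S × D ↦ A)` distributed as `p`, with `q` the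
positive marginal of `S`), interventional fairness is equivalent to the
linear constraints
`Σ_r (1[r₂(0,d)=1] − 1[r₂(1,d)=1]) p(r) = 0` for all `d`. -/
theorem stmt15 {𝓓 : Type} [Fintype 𝓓] [DecidableEq 𝓓]
    (p : ((Bool → 𝓓) × (Bool → 𝓓 → Bool)) → ℝ)
    (hp : ∀ r, 0 ≤ p r) (hsum : ∑ r, p r = 1)
    (q : Bool → ℝ) (hq : ∀ s, 0 < q s) (hq1 : q false + q true = 1) :
    (∀ (s : Bool) (d : 𝓓),
        (∑ r, if r.2 s d = true then p r else 0)
          = ∑ s' : Bool, q s' * ∑ r, if r.2 s' d = true then p r else 0) ↔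
    (∀ d : 𝓓,
        ∑ r, ((if r.2 false d = true then (1 : ℝ) else 0)
              - (if r.2 true d = true then (1 : ℝ) else 0)) * p r = 0) := by
  have key : ∀ d : 𝓓, ∑ r, ((if r.2 false d = true then (1 : ℝ) else 0)
              - (if r.2 true d = true then (1 : ℝ) else 0)) * p r
      = (∑ r, if r.2 false d = true then p r else 0)
        - (∑ r, if r.2 true d = true then p r else 0) := by
    intro d
    rw [← Finset.sum_sub_distrib]
    refine Finset.sum_congr rfl fun r _ => ?_
    by_cases h1 : r.2 false d = true <;> by_cases h2 : r.2 true d = true <;>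
      simp [h1, h2]
  constructor
  · intro h d
    rw [key]
    have h1 := h false d
    rw [Fintype.sum_bool] at h1
    set F := ∑ r, if r.2 false d = true then p r else 0 with hF
    set T := ∑ r, if r.2 true d = true then p r else 0 with hT
    have hz : q true * (F - T) = 0 := by linear_combination h1 + F * hq1
    rcases mul_eq_zero.mp hz with h' | h'
    · exact absurd h' (ne_of_gt (hq true))
    · linarith
  · intro h s d
    have hd := h d
    rw [key] at hd
    rw [Fintype.sum_bool]
    set F := ∑ r, if r.2 false d = true then p r else 0 with hF
    set T := ∑ r, if r.2 true d = true then p r else 0 with hT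
    cases s
    · linear_combination q true * hd - F * hq1
    · linear_combination (-q false) * hd - T * hq1
end

section
/- In the response-function parameterization, if for all d the balance condition Σ_{r: r_2(0,d)=1} P̃(r) = Σ_{r: r_2(1,d)=1} P̃(r) holds, then the induced interventional kernel P(D=d, A=a | do(S=s)) = Σ_{r: r_1(s)=d, r_2(s,d)=a} P̃(r) satisfies the IV inequalities: P(D=d,A=0|do(S=0)) + P(D=d,A=1|do(S=1)) ≤ 1 and P(D=d,A=0|do(S=1)) + P(D=d,A=1|do(S=0)) ≤ 1 for all d. -/
/-- In the response-function parameterization, if the balance condition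
`Σ_{r : r₂(0,d)=1} p(r) = Σ_{r : r₂(1,d)=1} p(r)` holds for all `d`, then the
induced interventional kernel `K s d a = P(D=d, A=a | do(S=s))` satisfies the
IV inequalities. -/
theorem stmt16 {𝓓 : Type} [Fintype 𝓓] [DecidableEq 𝓓]
    (p : ((Bool → 𝓓) × (Bool → 𝓓 → Bool)) → ℝ)
    (hp : ∀ r, 0 ≤ p r) (hsum : ∑ r, p r = 1)
    (hbal : ∀ d : 𝓓,
      (∑ r, if r.2 false d = true then p r else 0)
        = ∑ r, if r.2 true d = true then p r else 0)
    (K : Bool → 𝓓 → Bool → ℝ)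
    (hK : ∀ (s : Bool) (d : 𝓓) (a : Bool),
      K s d a = ∑ r, if r.1 s = d ∧ r.2 s d = a then p r else 0) :
    ∀ d : 𝓓,
      K false d false + K true d true ≤ 1 ∧
      K true d false + K false d true ≤ 1 := by
  intro d
  have h1 : ∀ (s : Bool) (a : Bool),
      K s d a ≤ ∑ r, if r.2 s d = a then p r else 0 := by
    intro s a
    rw [hK]
    apply Finset.sum_le_sum
    intro r _
    by_cases h : r.2 s d = a
    · by_cases h' : r.1 s = d <;> simp [h, h', hp r]
    · simp [h]
  have h2 : ∀ s : Bool,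
      (∑ r, if r.2 s d = false then p r else 0)
        + (∑ r, if r.2 s d = true then p r else 0) = 1 := by
    intro s
    rw [← hsum, ← Finset.sum_add_distrib]
    apply Finset.sum_congr rfl
    intro r _
    cases h : r.2 s d <;> simp [h]
  constructor
  · have := h2 false
    rw [hbal d] at this
    linarith [h1 false false, h1 true true]
  · have := h2 true
    rw [← hbal d] at this
    linarith [h1 true false, h1 false true]
end

section
/- In M_no-cf, an SCM satisfies path-dependent counterfactual fairness (for all s, d with P(S=s,D=d) > 0 and s' ≠ s: P(A^{do(S=s',D=d)}=1 | D=d, S=s) = P(A^{do(S=s,D=d)}=1 | D=d, S=s)) if and only if the conditional probability P(f_A(s,d,U_A)=1) does not depend on s for every d in the support; consequently the set of observational distributions of path-dependent counterfactually fair models equals the set of distributions with A ⟂ S | D. -/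
open MeasureTheory ProbabilityTheory
open scoped ENNReal

/-- `P` is the observational distribution of an SCM in the no-confounding
model class that satisfies path-dependent counterfactual fairness:
for all `s, d` with `P(S=s, D=d) > 0` and all `s'`,
`P(A^{do(S=s',D=d)}=1 | D=d, S=s) = P(A^{do(S=s,D=d)}=1 | D=d, S=s)`. -/
def RealizablePDCF {𝓓 : Type} [MeasurableSpace 𝓓]
    (P : Measure (Bool × 𝓓 × Bool)) : Prop :=
  ∃ (Ω 𝓤A : Type) (_ : MeasurableSpace Ω) (_ : MeasurableSpace 𝓤A)
    (μ : Measure Ω) (_ : IsProbabilityMeasure μ)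
    (S : Ω → Bool) (D : Ω → 𝓓) (UA : Ω → 𝓤A)
    (fA : Bool → 𝓓 → 𝓤A → Bool),
    Measurable S ∧ Measurable D ∧ Measurable UA ∧
    (∀ s d, Measurable (fA s d)) ∧
    IndepFun (fun ω => (S ω, D ω)) UA μ ∧
    (∀ (s : Bool) (d : 𝓓), 0 < μ {ω | S ω = s ∧ D ω = d} →
      ∀ s' : Bool,
        μ {ω | fA s' d (UA ω) = true ∧ S ω = s ∧ D ω = d}
            / μ {ω | S ω = s ∧ D ω = d}
          = μ {ω | fA s d (UA ω) = true ∧ S ω = s ∧ D ω = d}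
            / μ {ω | S ω = s ∧ D ω = d}) ∧
    Measure.map (fun ω => (S ω, D ω, fA (S ω) (D ω) (UA ω))) μ = P

/-!
Independence of `U_A` from `(S, D)` turns `P(A^{do(S=s',D=d)} = 1 | S = s, D = d)` into the
unconditional `P(f_A(s', d, U_A) = 1)`, which gives the first equivalence. In a fair model these
probabilities do not depend on `s` wherever `(s, d)` has positive mass, so
`P(S = s, D = d, A = a) = P(S = s, D = d) · r(d, a)` with `r` independent of `s`: this is
`A ⟂ S | D`. Conversely, if `A ⟂ S | D`, draw `(S, D)` from `P` and, independently, a response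
function `U_A : 𝓓 → Bool` whose coordinates are independent with `U_A(d)` distributed as `A` given
`D = d`, and set `f_A(s, d, u) = u(d)`. Since `f_A` ignores `s` the model is trivially fair, and its
observational distribution is `P`.
-/

section Model

variable {Ω 𝓤A 𝓓 : Type*} [MeasurableSpace Ω] [MeasurableSpace 𝓤A] [MeasurableSpace 𝓓]
  {μ : Measure Ω} {S : Ω → Bool} {D : Ω → 𝓓} {UA : Ω → 𝓤A} {fA : Bool → 𝓓 → 𝓤A → Bool}

lemma measure_setOf_eq_of_eq_true [IsFiniteMeasure μ] {X Y : Ω → Bool}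
    (hX : Measurable X) (hY : Measurable Y)
    (h : μ {ω | X ω = true} = μ {ω | Y ω = true}) (a : Bool) :
    μ {ω | X ω = a} = μ {ω | Y ω = a} := by
  cases a
  · have hcompl (Z : Ω → Bool) : {ω | Z ω = false} = {ω | Z ω = true}ᶜ := by ext; simp
    have hmeas {Z : Ω → Bool} (hZ : Measurable Z) : MeasurableSet {ω | Z ω = true} :=
      hZ (measurableSet_singleton true)
    rw [hcompl, hcompl, measure_compl (hmeas hX) (measure_ne_top μ _),
      measure_compl (hmeas hY) (measure_ne_top μ _), h]
  · exact h

lemma measure_response_inter_eq_mul [MeasurableSingletonClass 𝓓] {s' : Bool} {d : 𝓓}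
    (hfA : Measurable (fA s' d)) (hind : IndepFun (fun ω => (S ω, D ω)) UA μ) (s a : Bool) :
    μ {ω | fA s' d (UA ω) = a ∧ S ω = s ∧ D ω = d}
      = μ {ω | fA s' d (UA ω) = a} * μ {ω | S ω = s ∧ D ω = d} := by
  have h := hind.measure_inter_preimage_eq_mul {(s, d)} (fA s' d ⁻¹' {a})
    (measurableSet_singleton _) (hfA (measurableSet_singleton a))
  rw [mul_comm]
  convert h using 3 <;> ext ω <;> simp [and_comm]

lemma pathCF_iff_measure_response_eq [MeasurableSingletonClass 𝓓] [IsFiniteMeasure μ]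
    (hfA : ∀ s d, Measurable (fA s d)) (hind : IndepFun (fun ω => (S ω, D ω)) UA μ) :
    (∀ (s : Bool) (d : 𝓓), 0 < μ {ω | S ω = s ∧ D ω = d} →
      ∀ s' : Bool,
        μ {ω | fA s' d (UA ω) = true ∧ S ω = s ∧ D ω = d} / μ {ω | S ω = s ∧ D ω = d}
          = μ {ω | fA s d (UA ω) = true ∧ S ω = s ∧ D ω = d} / μ {ω | S ω = s ∧ D ω = d}) ↔
    (∀ (d : 𝓓) (s : Bool), 0 < μ {ω | S ω = s ∧ D ω = d} →
      ∀ s' : Bool, μ {ω | fA s' d (UA ω) = true} = μ {ω | fA s d (UA ω) = true}) := by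
  have hcond (s s' : Bool) (d : 𝓓) (hpos : 0 < μ {ω | S ω = s ∧ D ω = d}) :
      μ {ω | fA s' d (UA ω) = true ∧ S ω = s ∧ D ω = d} / μ {ω | S ω = s ∧ D ω = d}
        = μ {ω | fA s' d (UA ω) = true} := by
    rw [measure_response_inter_eq_mul (hfA s' d) hind,
      ENNReal.mul_div_cancel_right hpos.ne' (measure_ne_top μ _)]
  refine ⟨fun h d s hpos s' => ?_, fun h s d hpos s' => ?_⟩
  · rw [← hcond s s' d hpos, ← hcond s s d hpos, h s d hpos s']
  · rw [hcond s s' d hpos, hcond s s d hpos, h d s hpos s']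

lemma measure_observed_eq_mul_of_measure_response_eq [MeasurableSingletonClass 𝓓]
    [IsFiniteMeasure μ] (hUA : Measurable UA) (hfA : ∀ s d, Measurable (fA s d))
    (hind : IndepFun (fun ω => (S ω, D ω)) UA μ)
    (hfair : ∀ (d : 𝓓) (s : Bool), 0 < μ {ω | S ω = s ∧ D ω = d} →
      ∀ s' : Bool, μ {ω | fA s' d (UA ω) = true} = μ {ω | fA s d (UA ω) = true})
    (s : Bool) (d : 𝓓) (a : Bool) :
    μ {ω | S ω = s ∧ D ω = d ∧ fA (S ω) (D ω) (UA ω) = a}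
      = μ {ω | S ω = s ∧ D ω = d} * μ {ω | fA true d (UA ω) = a} := by
  have hset : {ω | S ω = s ∧ D ω = d ∧ fA (S ω) (D ω) (UA ω) = a}
      = {ω | fA s d (UA ω) = a ∧ S ω = s ∧ D ω = d} := by
    ext ω
    constructor
    · rintro ⟨rfl, rfl, h⟩
      exact ⟨h, rfl, rfl⟩
    · rintro ⟨h, rfl, rfl⟩
      exact ⟨rfl, rfl, h⟩
  rw [hset, measure_response_inter_eq_mul (hfA s d) hind, mul_comm]
  rcases eq_or_ne (μ {ω | S ω = s ∧ D ω = d}) 0 with h0 | h0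
  · rw [h0, zero_mul, zero_mul]
  · congr 1
    exact measure_setOf_eq_of_eq_true ((hfA s d).comp hUA) ((hfA true d).comp hUA)
      (hfair d s (pos_iff_ne_zero.2 h0) true).symm a

lemma measurable_observed [Countable 𝓓] [MeasurableSingletonClass 𝓓]
    (hS : Measurable S) (hD : Measurable D) (hUA : Measurable UA)
    (hfA : ∀ s d, Measurable (fA s d)) :
    Measurable fun ω => (S ω, D ω, fA (S ω) (D ω) (UA ω)) := by
  have hf : Measurable fun p : (Bool × 𝓓) × 𝓤A => fA p.1.1 p.1.2 p.2 :=
    measurable_from_prod_countable_right fun x => hfA x.1 x.2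
  exact hS.prodMk (hD.prodMk (hf.comp ((hS.prodMk hD).prodMk hUA)))

end Model

section Observational

variable {𝓓 : Type} [MeasurableSpace 𝓓]

lemma measure_eq_add_fst_bool {β : Type*} [MeasurableSpace β] (P : Measure (Bool × β))
    {p : β → Prop} (hp : MeasurableSet {b | p b}) :
    P {v | p v.2} = P {v | v.1 = true ∧ p v.2} + P {v | v.1 = false ∧ p v.2} := by
  have hmeas : MeasurableSet {v : Bool × β | v.1 = false ∧ p v.2} :=
    (measurable_fst (measurableSet_singleton false)).inter (measurable_snd hp)
  rw [← measure_union (Set.disjoint_left.2 fun v h₁ h₂ => by simp_all) hmeas]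
  congr 1
  ext ⟨b, x⟩
  cases b <;> simp

lemma obsCI_of_measure_eq_mul [Countable 𝓓] [MeasurableSingletonClass 𝓓]
    {P : Measure (Bool × 𝓓 × Bool)} (r : 𝓓 → Bool → ℝ≥0∞)
    (h : ∀ s d a, P {v | v.1 = s ∧ v.2.1 = d ∧ v.2.2 = a} = P {v | v.1 = s ∧ v.2.1 = d} * r d a) :
    ObsCI P := by
  intro s d a
  have hD : P {v | v.2.1 = d}
      = P {v | v.1 = true ∧ v.2.1 = d} + P {v | v.1 = false ∧ v.2.1 = d} :=
    measure_eq_add_fst_bool P (p := fun x => x.1 = d) .of_discrete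
  have hDA : P {v | v.2.1 = d ∧ v.2.2 = a}
      = P {v | v.1 = true ∧ v.2.1 = d ∧ v.2.2 = a} + P {v | v.1 = false ∧ v.2.1 = d ∧ v.2.2 = a} :=
    measure_eq_add_fst_bool P (p := fun x => x.1 = d ∧ x.2 = a) .of_discrete
  rw [hD, hDA, h, h true, h false]
  ring

lemma ObsCI.measure_eq_mul_condDistrib [Countable 𝓓] [MeasurableSingletonClass 𝓓]
    {P : Measure (Bool × 𝓓 × Bool)} [IsFiniteMeasure P] (hP : ObsCI P) (s : Bool) (d : 𝓓)
    (a : Bool) :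
    P {v | v.1 = s ∧ v.2.1 = d ∧ v.2.2 = a}
      = P {v | v.1 = s ∧ v.2.1 = d} * condDistrib (fun v => v.2.2) (fun v => v.2.1) P d {a} := by
  rcases eq_or_ne (P {v | v.2.1 = d}) 0 with hd | hd
  · rw [measure_mono_null (fun v hv => hv.2.1) hd, measure_mono_null (fun v hv => hv.2) hd,
      zero_mul]
  have hX : Measurable fun v : Bool × 𝓓 × Bool => v.2.1 := measurable_snd.fst
  have hY : Measurable fun v : Bool × 𝓓 × Bool => v.2.2 := measurable_snd.snd
  rw [condDistrib_apply_of_ne_zero hY d (by rwa [Measure.map_apply hX (measurableSet_singleton d)]),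
    Measure.map_apply hX (measurableSet_singleton d),
    Measure.map_apply (hX.prodMk hY) .of_discrete]
  have hpreD : (fun v : Bool × 𝓓 × Bool => v.2.1) ⁻¹' {d} = {v | v.2.1 = d} := rfl
  have hpreDA : (fun v : Bool × 𝓓 × Bool => (v.2.1, v.2.2)) ⁻¹' ({d} ×ˢ {a})
      = {v | v.2.1 = d ∧ v.2.2 = a} := rfl
  rw [hpreD, hpreDA, ← ENNReal.mul_inv_cancel_right hd (measure_ne_top P _)
    (a := P {v | v.1 = s ∧ v.2.1 = d ∧ v.2.2 = a}), hP s d a]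
  ring

end Observational

section ResponseFunctionModel

variable {𝓓 : Type} [MeasurableSpace 𝓓] [Fintype 𝓓] [MeasurableSingletonClass 𝓓]

lemma map_prod_pi_apply_singleton (P : Measure (Bool × 𝓓 × Bool)) [SFinite P]
    (ν : 𝓓 → Measure Bool) [∀ d, IsProbabilityMeasure (ν d)] (s : Bool) (d : 𝓓) (a : Bool) :
    (P.prod (Measure.pi ν)).map (fun ω => (ω.1.1, ω.1.2.1, ω.2 ω.1.2.1)) {(s, d, a)}
      = P {v | v.1 = s ∧ v.2.1 = d} * ν d {a} := by
  have hF : Measurable fun ω : (Bool × 𝓓 × Bool) × (𝓓 → Bool) => (ω.1.1, ω.1.2.1, ω.2 ω.1.2.1) :=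
    measurable_from_prod_countable_right fun v => by fun_prop
  have hpre : (fun ω : (Bool × 𝓓 × Bool) × (𝓓 → Bool) => (ω.1.1, ω.1.2.1, ω.2 ω.1.2.1))
      ⁻¹' {(s, d, a)} = {v | v.1 = s ∧ v.2.1 = d} ×ˢ ((Function.eval d : (𝓓 → Bool) → Bool) ⁻¹' {a}) := by
    ext ⟨⟨s', d', a'⟩, g⟩
    simp only [Set.mem_preimage, Set.mem_singleton_iff, Prod.mk.injEq, Set.mem_prod,
      Function.eval]
    constructor
    · rintro ⟨rfl, rfl, h⟩
      exact ⟨⟨rfl, rfl⟩, h⟩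
    · rintro ⟨⟨rfl, rfl⟩, h⟩
      exact ⟨rfl, rfl, h⟩
  rw [Measure.map_apply hF (measurableSet_singleton _), hpre, Measure.prod_prod,
    (measurePreserving_eval ν d).measure_preimage (measurableSet_singleton a).nullMeasurableSet]

lemma realizablePDCF_of_measure_eq_mul {P : Measure (Bool × 𝓓 × Bool)} [IsProbabilityMeasure P]
    (ν : 𝓓 → Measure Bool) [∀ d, IsProbabilityMeasure (ν d)]
    (h : ∀ s d a, P {v | v.1 = s ∧ v.2.1 = d ∧ v.2.2 = a} = P {v | v.1 = s ∧ v.2.1 = d} * ν d {a}) :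
    RealizablePDCF P := by
  refine ⟨(Bool × 𝓓 × Bool) × (𝓓 → Bool), 𝓓 → Bool, inferInstance, inferInstance,
    P.prod (Measure.pi ν), inferInstance, fun ω => ω.1.1, fun ω => ω.1.2.1, Prod.snd,
    fun _ d g => g d, by fun_prop, by fun_prop, measurable_snd, fun _ d => measurable_pi_apply d,
    indepFun_prod (X := fun v : Bool × 𝓓 × Bool => (v.1, v.2.1)) (Y := id) (by fun_prop)
      measurable_id, fun _ _ _ _ => rfl, ?_⟩
  refine Measure.ext_of_singleton fun ⟨s, d, a⟩ => ?_
  rw [map_prod_pi_apply_singleton, ← h]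
  congr 1
  ext
  simp [Prod.ext_iff]

end ResponseFunctionModel

lemma RealizablePDCF.isProbabilityMeasure_and_obsCI {𝓓 : Type} [MeasurableSpace 𝓓] [Countable 𝓓]
    [MeasurableSingletonClass 𝓓] {P : Measure (Bool × 𝓓 × Bool)} (hP : RealizablePDCF P) :
    IsProbabilityMeasure P ∧ ObsCI P := by
  obtain ⟨Ω, 𝓤A, _, _, μ, _, S, D, UA, fA, hS, hD, hUA, hfA, hind, hfair, rfl⟩ := hP
  have hF := measurable_observed hS hD hUA hfA
  refine ⟨Measure.isProbabilityMeasure_map hF.aemeasurable,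
    obsCI_of_measure_eq_mul (fun d a => μ {ω | fA true d (UA ω) = a}) fun s d a => ?_⟩
  rw [Measure.map_apply hF .of_discrete, Measure.map_apply hF .of_discrete]
  exact measure_observed_eq_mul_of_measure_response_eq hUA hfA hind
    ((pathCF_iff_measure_response_eq hfA hind).1 hfair) s d a

/-- In the no-confounding model class, path-dependent counterfactual fairness
holds iff `P(f_A(s,d,U_A)=1)` does not depend on `s` for every `d` in the
support; consequently, the set of observational distributions of
path-dependent counterfactually fair models equals the set of distributions
with `A ⟂ S | D`. -/
theorem stmt19 {𝓓 : Type} [MeasurableSpace 𝓓] [MeasurableSingletonClass 𝓓]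
    [Fintype 𝓓] :
    (∀ (Ω 𝓤A : Type) (_ : MeasurableSpace Ω) (_ : MeasurableSpace 𝓤A)
       (μ : Measure Ω) (_ : IsProbabilityMeasure μ)
       (S : Ω → Bool) (D : Ω → 𝓓) (UA : Ω → 𝓤A)
       (fA : Bool → 𝓓 → 𝓤A → Bool),
       Measurable S → Measurable D → Measurable UA →
       (∀ s d, Measurable (fA s d)) →
       IndepFun (fun ω => (S ω, D ω)) UA μ →
       ((∀ (s : Bool) (d : 𝓓), 0 < μ {ω | S ω = s ∧ D ω = d} →
          ∀ s' : Bool,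
            μ {ω | fA s' d (UA ω) = true ∧ S ω = s ∧ D ω = d}
                / μ {ω | S ω = s ∧ D ω = d}
              = μ {ω | fA s d (UA ω) = true ∧ S ω = s ∧ D ω = d}
                / μ {ω | S ω = s ∧ D ω = d}) ↔
        (∀ (d : 𝓓) (s : Bool), 0 < μ {ω | S ω = s ∧ D ω = d} →
          ∀ s' : Bool,
            μ {ω | fA s' d (UA ω) = true} = μ {ω | fA s d (UA ω) = true})))
    ∧ (∀ P : Measure (Bool × 𝓓 × Bool),
        RealizablePDCF P ↔ (IsProbabilityMeasure P ∧ ObsCI P)) := by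
  refine ⟨fun Ω 𝓤A _ _ μ _ S D UA fA _ _ _ hfA hind => pathCF_iff_measure_response_eq hfA hind,
    fun P => ⟨RealizablePDCF.isProbabilityMeasure_and_obsCI, ?_⟩⟩
  rintro ⟨_, hCI⟩
  exact realizablePDCF_of_measure_eq_mul _ hCI.measure_eq_mul_condDistrib
end
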